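/- arXiv:2107.05022 — 6 statements merged into one kernel-verified Lean document; each statement's English description precedes it below -/
import Mathlib

section
/- Let (X,d,μ) be a metric measure space with a doubling measure μ, Ω ⊂ X an open set, and w a weight on Ω. Then w ∈ WRH_∞(Ω) if and only if there exists a constant C > 0 such that M(w χ_B)(x) ≤ C w_{2B} for almost every x ∈ B, for every ball B with 2B ⋐ Ω (trivially for balls with w(2B)=0). -/
/-!
For every ball `B`, the maximal function of `w χ_B` is bounded everywhere by `ess sup_B w`, and
conversely, by the Lebesgue differentiation theorem, `w ≤ M(w χ_B)` almost everywhere on `B`.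
So the two conditions are equivalent ball by ball, with the same constant. The differentiation
theorem for a doubling measure needs the space to be separable; this holds because balls have
positive measure and the measure is σ-finite, so every disjoint family of balls is countable.
-/

open MeasureTheory Metric Set
open scoped ENNReal

/-- The (uncentered) Hardy–Littlewood maximal function of `f`:
`Mf(x) = sup { ⨍_B |f| dμ : B a ball containing x }`. -/
noncomputable def HLMax {X : Type*} [PseudoMetricSpace X] [MeasurableSpace X]
    (μ : Measure X) (f : X → ℝ) (x : X) : ℝ≥0∞ :=
  ⨆ (z : X) (r : ℝ) (_ : x ∈ ball z r),
    (μ (ball z r))⁻¹ * ∫⁻ y in ball z r, ENNReal.ofReal |f y| ∂μ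

section BallMeasures

variable {X : Type*} [PseudoMetricSpace X] [MeasurableSpace X] (μ : Measure X)

theorem sigmaFinite_of_measure_ball_lt_top (h : ∀ (x : X) (r : ℝ), 0 < r → μ (ball x r) < ⊤) :
    SigmaFinite μ := by
  rcases isEmpty_or_nonempty X with _ | ⟨⟨x₀⟩⟩
  · infer_instance
  · exact Measure.sigmaFinite_of_countable (countable_range fun n : ℕ => ball x₀ (n + 1))
      (forall_mem_range.2 fun n => h _ _ n.cast_add_one_pos)
      (by rw [sUnion_range, iUnion_ball_nat_succ])

theorem secondCountableTopology_of_measure_ball_pos [OpensMeasurableSpace X] [SFinite μ]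
    (h : ∀ (x : X) (r : ℝ), 0 < r → 0 < μ (ball x r)) : SecondCountableTopology X := by
  refine Metric.secondCountable_of_almost_dense_set fun ε hε => ?_
  obtain ⟨u, -, hdisj, hcover⟩ := Vitali.exists_disjoint_subfamily_covering_enlargement_ball univ
    (id : X → X) (fun _ => ε / 4) (ε / 4) (fun _ _ => le_rfl) 4 (by norm_num)
  -- the centres of a maximal disjoint family of `ε / 4`-balls are `ε`-dense
  refine ⟨u, ?_, fun x => ?_⟩
  · have hcount := Measure.countable_meas_pos_of_disjoint_iUnion (μ := μ)
      (As := fun a : u => ball (a : X) (ε / 4)) (fun _ => measurableSet_ball)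
      (fun a b hab => hdisj a.2 b.2 (Subtype.coe_ne_coe.2 hab))
    simp only [h _ _ (by positivity : 0 < ε / 4), ofPred_true, countable_univ_iff] at hcount
    exact countable_coe_iff.1 hcount
  · obtain ⟨b, hb, hsub⟩ := hcover x (mem_univ x)
    have hxb : dist x b < 4 * (ε / 4) := hsub (mem_ball_self (by positivity))
    exact ⟨b, hb, by linarith⟩

theorem isUnifLocDoublingMeasure_of_measure_ball_two_mul_le {Cd : ℝ}
    (h : ∀ (x : X) (r : ℝ), 0 < r → μ (ball x (2 * r)) ≤ ENNReal.ofReal Cd * μ (ball x r)) :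
    IsUnifLocDoublingMeasure μ := by
  refine ⟨⟨Cd.toNNReal ^ 2, ?_⟩⟩
  filter_upwards [self_mem_nhdsWithin] with ε (hε : 0 < ε) x
  calc μ (closedBall x (2 * ε)) ≤ μ (ball x (2 * (2 * ε))) :=
        measure_mono (closedBall_subset_ball (by linarith))
    _ ≤ ENNReal.ofReal Cd * (ENNReal.ofReal Cd * μ (ball x ε)) :=
        (h x _ (by positivity)).trans (by gcongr; exact h x ε hε)
    _ ≤ Cd.toNNReal ^ 2 * μ (closedBall x ε) := by
        rw [← mul_assoc, ← sq]
        gcongr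
        · rfl
        · exact ball_subset_closedBall

end BallMeasures

section HLMax

variable {X : Type*} [PseudoMetricSpace X] [MeasurableSpace X] {μ : Measure X}

theorem HLMax_le_of_ae_le {f : X → ℝ} {S : ℝ≥0∞}
    (h : ∀ᵐ y ∂μ, ENNReal.ofReal |f y| ≤ S) (x : X) : HLMax μ f x ≤ S := by
  refine iSup₂_le fun z r => iSup_le fun _ => ?_
  rw [mul_comm, ← div_eq_mul_inv]
  refine ENNReal.div_le_of_le_mul ?_
  calc ∫⁻ y in ball z r, ENNReal.ofReal |f y| ∂μ ≤ ∫⁻ _ in ball z r, S ∂μ :=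
        lintegral_mono_ae (ae_restrict_of_ae h)
    _ = S * μ (ball z r) := setLIntegral_const _ _

theorem HLMax_indicator_le_essSup {w : X → ℝ} (hw : ∀ x, 0 ≤ w x)
    {s : Set X} (hs : MeasurableSet s) (x : X) :
    HLMax μ (s.indicator w) x ≤ essSup (fun y => ENNReal.ofReal (w y)) (μ.restrict s) := by
  refine HLMax_le_of_ae_le ?_ x
  filter_upwards [(ae_restrict_iff' hs).1 (ENNReal.ae_le_essSup _)] with y hy
  by_cases hys : y ∈ s
  · simpa [hys, abs_of_nonneg (hw y)] using hy hys
  · simp [hys]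

theorem lintegral_ball_le_measure_mul_HLMax {f : X → ℝ} {x z : X} {r : ℝ} (hx : x ∈ ball z r)
    (hr : μ (ball z r) ≠ ⊤) :
    ∫⁻ y in ball z r, ENNReal.ofReal |f y| ∂μ ≤ μ (ball z r) * HLMax μ f x := by
  rcases eq_or_ne (μ (ball z r)) 0 with h0 | h0
  · simp [Measure.restrict_eq_zero.2 h0]
  · rw [← ENNReal.inv_mul_le_iff h0 hr]
    exact le_iSup₂_of_le z r (le_iSup_of_le hx le_rfl)

theorem lintegral_closedBall_le_measure_mul_HLMax [OpensMeasurableSpace X] {f : X → ℝ} {x : X}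
    {ρ R : ℝ} (hρ : 0 ≤ ρ) (hρR : ρ < R) (hR : μ (ball x R) ≠ ⊤) :
    ∫⁻ y in closedBall x ρ, ENNReal.ofReal |f y| ∂μ ≤ μ (closedBall x ρ) * HLMax μ f x := by
  rcases eq_or_ne (μ (closedBall x ρ)) 0 with h0 | h0
  · simp [Measure.restrict_eq_zero.2 h0]
  -- `HLMax` only sees open balls: approximate `closedBall x ρ` by `ball x r` as `r ↓ ρ`
  have hballs : Filter.Tendsto (fun r => μ (ball x r)) (nhdsWithin ρ (Ioi ρ))
      (nhds (μ (closedBall x ρ))) := by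
    rw [← biInter_gt_ball]
    exact tendsto_measure_biInter_gt (fun _ _ => measurableSet_ball.nullMeasurableSet)
      (fun _ _ _ hij => ball_subset_ball hij) ⟨R, hρR, hR⟩
  refine ge_of_tendsto (ENNReal.Tendsto.mul_const hballs (.inl h0)) ?_
  filter_upwards [Ioo_mem_nhdsGT hρR] with r hr
  calc ∫⁻ y in closedBall x ρ, ENNReal.ofReal |f y| ∂μ
      ≤ ∫⁻ y in ball x r, ENNReal.ofReal |f y| ∂μ :=
        lintegral_mono_set (closedBall_subset_ball hr.1)
    _ ≤ μ (ball x r) * HLMax μ f x :=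
        lintegral_ball_le_measure_mul_HLMax (mem_ball_self (hρ.trans_lt hr.1))
          (ne_top_of_le_ne_top hR (measure_mono (ball_subset_ball hr.2.le)))

theorem ae_ofReal_abs_le_HLMax [SecondCountableTopology X] [BorelSpace X]
    [IsLocallyFiniteMeasure μ] [IsUnifLocDoublingMeasure μ] {f : X → ℝ} (hf : Integrable f μ) :
    ∀ᵐ x ∂μ, ENNReal.ofReal |f x| ≤ HLMax μ f x := by
  have hfin : ∫⁻ y, ENNReal.ofReal |f y| ∂μ ≠ ⊤ := by
    simpa only [Real.enorm_eq_ofReal_abs] using hf.2.ne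
  filter_upwards [(IsUnifLocDoublingMeasure.vitaliFamily μ 1).ae_tendsto_lintegral_div
    (by fun_prop) hfin] with x hx
  have hcenter : ∀ᶠ ρ in nhdsWithin (0 : ℝ) (Ioi 0), x ∈ closedBall x (1 * id ρ) := by
    filter_upwards [self_mem_nhdsWithin] with ρ (hρ : 0 < ρ)
    exact mem_closedBall_self (by simpa using hρ.le)
  have hshrink := hx.comp (IsUnifLocDoublingMeasure.tendsto_closedBall_filterAt μ
    (fun _ => x) id Filter.tendsto_id hcenter)
  obtain ⟨R, hR, hRfin⟩ := (μ.finiteAt_nhds x).exists_mem_basis nhds_basis_ball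
  refine le_of_tendsto hshrink ?_
  filter_upwards [Ioo_mem_nhdsGT hR] with ρ hρ
  exact ENNReal.div_le_of_le_mul (mul_comm (HLMax μ f x) _ ▸
    lintegral_closedBall_le_measure_mul_HLMax hρ.1.le hρ.2 hRfin.ne)

theorem essSup_le_of_ae_HLMax_indicator_le [SecondCountableTopology X] [BorelSpace X]
    [IsLocallyFiniteMeasure μ] [IsUnifLocDoublingMeasure μ] {w : X → ℝ} {s : Set X}
    (hs : MeasurableSet s) (hw : IntegrableOn w s μ) {S : ℝ≥0∞}
    (h : ∀ᵐ y ∂μ.restrict s, HLMax μ (s.indicator w) y ≤ S) :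
    essSup (fun y => ENNReal.ofReal (w y)) (μ.restrict s) ≤ S := by
  refine essSup_le_of_ae_le S ?_
  filter_upwards [ae_restrict_of_ae (ae_ofReal_abs_le_HLMax ((integrable_indicator_iff hs).2 hw)),
    h, ae_restrict_mem hs] with y hmax hS hy
  calc ENNReal.ofReal (w y) ≤ ENNReal.ofReal |s.indicator w y| := by
        rw [indicator_of_mem hy]; exact ENNReal.ofReal_le_ofReal (le_abs_self _)
    _ ≤ HLMax μ (s.indicator w) y := hmax
    _ ≤ S := hS

end HLMax

theorem wrhInfty_iff_maximal_le_general {X : Type*} [MetricSpace X] [MeasurableSpace X] [BorelSpace X]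
    (μ : Measure X) (Cd : ℝ)
    (hdoub : ∀ (x : X) (r : ℝ), 0 < r →
      0 < μ (ball x r) ∧ μ (ball x r) < ⊤ ∧
      μ (ball x (2 * r)) ≤ ENNReal.ofReal Cd * μ (ball x r))
    (Ω : Set X) (w : X → ℝ) (hw : ∀ x, 0 ≤ w x)
    (hwloc : LocallyIntegrableOn w Ω μ) :
    (∃ C : ℝ, 0 < C ∧ ∀ (x : X) (r : ℝ), 0 < r →
        IsCompact (closure (ball x (2 * r))) → closure (ball x (2 * r)) ⊆ Ω →
        essSup (fun y => ENNReal.ofReal (w y)) (μ.restrict (ball x r)) ≤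
          ENNReal.ofReal (C * ⨍ y in ball x (2 * r), w y ∂μ)) ↔
    (∃ C : ℝ, 0 < C ∧ ∀ (x : X) (r : ℝ), 0 < r →
        IsCompact (closure (ball x (2 * r))) → closure (ball x (2 * r)) ⊆ Ω →
        ∀ᵐ y ∂μ.restrict (ball x r),
          HLMax μ ((ball x r).indicator w) y ≤
            ENNReal.ofReal (C * ⨍ z in ball x (2 * r), w z ∂μ)) := by
  have : IsLocallyFiniteMeasure μ :=
    ⟨fun x => ⟨ball x 1, ball_mem_nhds x one_pos, (hdoub x 1 one_pos).2.1⟩⟩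
  have : SigmaFinite μ :=
    sigmaFinite_of_measure_ball_lt_top μ fun x r hr => (hdoub x r hr).2.1
  have : SecondCountableTopology X :=
    secondCountableTopology_of_measure_ball_pos μ fun x r hr => (hdoub x r hr).1
  have : IsUnifLocDoublingMeasure μ :=
    isUnifLocDoublingMeasure_of_measure_ball_two_mul_le μ fun x r hr => (hdoub x r hr).2.2
  refine exists_congr fun C => and_congr_right fun _ => forall₂_congr fun x r =>
    imp_congr_right fun hr => imp_congr_right fun hcomp => imp_congr_right fun hsub => ⟨?_, ?_⟩
  · exact fun hess => ae_of_all _ fun y =>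
      (HLMax_indicator_le_essSup hw measurableSet_ball y).trans hess
  · refine essSup_le_of_ae_HLMax_indicator_le measurableSet_ball ?_
    exact (hwloc.integrableOn_compact_subset hsub hcomp).mono_set
      ((ball_subset_ball (by linarith)).trans subset_closure)

/-- `w ∈ WRH_∞(Ω)` if and only if there is a constant `C > 0` such that
`M(w χ_B) ≤ C w_{2B}` almost everywhere on `B`, for every ball `B` with `2B ⋐ Ω`. -/
theorem wrhInfty_iff_maximal_le {X : Type*} [MetricSpace X] [MeasurableSpace X] [BorelSpace X]
    (μ : Measure X) (Cd : ℝ) (hCd : 1 < Cd)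
    (hdoub : ∀ (x : X) (r : ℝ), 0 < r →
      0 < μ (ball x r) ∧ μ (ball x r) < ⊤ ∧
      μ (ball x (2 * r)) ≤ ENNReal.ofReal Cd * μ (ball x r))
    (Ω : Set X) (hΩ : IsOpen Ω) (w : X → ℝ) (hw : ∀ x, 0 ≤ w x)
    (hwloc : LocallyIntegrableOn w Ω μ) :
    (∃ C : ℝ, 0 < C ∧ ∀ (x : X) (r : ℝ), 0 < r →
        IsCompact (closure (ball x (2 * r))) → closure (ball x (2 * r)) ⊆ Ω →
        essSup (fun y => ENNReal.ofReal (w y)) (μ.restrict (ball x r)) ≤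
          ENNReal.ofReal (C * ⨍ y in ball x (2 * r), w y ∂μ)) ↔
    (∃ C : ℝ, 0 < C ∧ ∀ (x : X) (r : ℝ), 0 < r →
        IsCompact (closure (ball x (2 * r))) → closure (ball x (2 * r)) ⊆ Ω →
        ∀ᵐ y ∂μ.restrict (ball x r),
          HLMax μ ((ball x r).indicator w) y ≤
            ENNReal.ofReal (C * ⨍ z in ball x (2 * r), w z ∂μ)) :=
  wrhInfty_iff_maximal_le_general μ Cd hdoub Ω w hw hwloc
end

section
/- Let (X,d,μ) be a metric measure space with a doubling measure μ, Ω ⊂ X an open set, and w a weight on Ω. Then w ∈ WRH_∞(Ω) if and only if there exist a nondecreasing function φ : (1,∞) → (0,∞) and a constant C > 0 such that esssup over B ∩ {w > w_{2B}} of w·φ(w / w_{2B}) is at most C w_{2B}, for every ball B with 2B ⋐ Ω (trivially for balls with w(2B)=0). Moreover, if w ∈ WRH_∞(Ω), then for every nondecreasing φ : (1,∞) → (0,∞) there exists such a constant C. -/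
/-!
On a ball `B` with `A = w_{2B} > 0`, the two conditions are equivalent up to constants because
on `{w > A}` the ratio `w / A` lies in `(1, ∞)`, where `φ` is monotone and positive. If
`w ≤ C A ≤ M A` a.e. on `B` with `M = max C 2`, then `φ(w / A) ≤ φ(M)` there, so
`w φ(w / A) ≤ M φ(M) A`. Conversely, where `w > M A` with `M ≥ 2`, monotonicity gives
`w φ(w / A) ≥ w φ(2) > M φ(2) A`, which exceeds `C A` once `M ≥ C / φ(2)`. Balls with `A = 0`, where `w / A = 0` and the
`φ`-condition carries no information, are handled separately: there `w = 0` a.e. on `2B`,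
since `0 < μ(2B) < ∞`.
-/

open MeasureTheory Metric Set
open scoped ENNReal

section Pointwise

variable {φ : ℝ → ℝ} {A C M t : ℝ}

theorem mul_apply_div_le (hφ : MonotoneOn φ (Ioi 1)) (hφpos : ∀ s, 1 < s → 0 < φ s)
    (hA : 0 ≤ A) (hAt : A < t) (htM : t ≤ M * A) : t * φ (t / A) ≤ M * φ M * A := by
  have hA' : 0 < A := hA.lt_of_ne (by rintro rfl; linarith)
  have h1 : 1 < t / A := (one_lt_div hA').2 hAt
  have h2 : t / A ≤ M := (div_le_iff₀ hA').2 htM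
  calc t * φ (t / A) ≤ (M * A) * φ (t / A) := by gcongr; exact (hφpos _ h1).le
    _ ≤ (M * A) * φ M := by gcongr; exacts [by linarith, hφ h1 (h1.trans_le h2) h2]
    _ = M * φ M * A := by ring

theorem mul_lt_mul_apply_div (hφ : MonotoneOn φ (Ioi 1)) (hφ2 : 0 < φ 2) (hA : 0 < A)
    (ht : max 2 (C / φ 2) * A < t) : C * A < t * φ (t / A) := by
  set M := max 2 (C / φ 2)
  have hMA : 2 * A ≤ M * A := by gcongr; exact le_max_left _ _
  have h2 : 2 ≤ t / A := (le_div_iff₀ hA).2 (hMA.trans ht.le)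
  have hCM : C ≤ M * φ 2 := (div_le_iff₀ hφ2).1 (le_max_right _ _)
  calc C * A ≤ M * φ 2 * A := by gcongr
    _ = (M * A) * φ 2 := by ring
    _ < t * φ 2 := by gcongr
    _ ≤ t * φ (t / A) := by
      gcongr
      exacts [by linarith, hφ (mem_Ioi.2 one_lt_two) (one_lt_two.trans_le h2) h2]

end Pointwise

section AlmostEverywhere

variable {α : Type*} [MeasurableSpace α] {ν : Measure α}

theorem essSup_ofReal_le_ofReal_iff {f : α → ℝ} {c : ℝ} (hc : 0 ≤ c) :
    essSup (fun y => ENNReal.ofReal (f y)) ν ≤ ENNReal.ofReal c ↔ ∀ᵐ y ∂ν, f y ≤ c :=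
  ⟨fun h => (ENNReal.ae_le_essSup _).mono fun _ hy =>
      (ENNReal.ofReal_le_ofReal_iff hc).1 (hy.trans h),
    fun h => essSup_le_of_ae_le _ (h.mono fun _ hy => ENNReal.ofReal_le_ofReal hy)⟩

theorem average_nonneg {f : α → ℝ} (hf : ∀ x, 0 ≤ f x) : 0 ≤ ⨍ x, f x ∂ν := by
  rw [average_eq]
  exact smul_nonneg (by positivity) (integral_nonneg hf)

theorem ae_eq_zero_of_setAverage_eq_zero {f : α → ℝ} {s : Set α} (hf : ∀ x, 0 ≤ f x)
    (hfi : IntegrableOn f s ν) (hs₀ : ν s ≠ 0) (hs : ν s ≠ ∞) (h : ⨍ x in s, f x ∂ν = 0) :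
    f =ᵐ[ν.restrict s] 0 := by
  rw [setAverage_eq, smul_eq_zero, inv_eq_zero, measureReal_eq_zero_iff hs] at h
  have hint : ∫ x in s, f x ∂ν = 0 := h.resolve_left hs₀
  exact (integral_eq_zero_iff_of_nonneg hf hfi).1 hint

variable {w : α → ℝ} {φ : ℝ → ℝ} {A C M : ℝ}

theorem ae_restrict_mul_apply_div_le (hw : AEMeasurable w ν) (hφ : MonotoneOn φ (Ioi 1))
    (hφpos : ∀ s, 1 < s → 0 < φ s) (hA : 0 ≤ A) (hwM : ∀ᵐ y ∂ν, w y ≤ M * A) :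
    ∀ᵐ y ∂ν.restrict {y | A < w y}, w y * φ (w y / A) ≤ M * φ M * A := by
  filter_upwards [ae_restrict_mem₀ (nullMeasurableSet_lt aemeasurable_const hw),
    ae_restrict_of_ae hwM] with y hAy hy
  exact mul_apply_div_le hφ hφpos hA hAy hy

theorem ae_le_of_ae_restrict_mul_apply_div_le (hw : AEMeasurable w ν) (hφ : MonotoneOn φ (Ioi 1))
    (hφ2 : 0 < φ 2) (hA : 0 < A)
    (h : ∀ᵐ y ∂ν.restrict {y | A < w y}, w y * φ (w y / A) ≤ C * A) :
    ∀ᵐ y ∂ν, w y ≤ max 2 (C / φ 2) * A := by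
  rw [ae_restrict_iff'₀ (nullMeasurableSet_lt aemeasurable_const hw)] at h
  filter_upwards [h] with y hy
  by_contra! hlt
  have hAy : A < w y :=
    (le_mul_of_one_le_left hA.le (one_le_two.trans (le_max_left _ _))).trans_lt hlt
  exact (mul_lt_mul_apply_div hφ hφ2 hA hlt).not_ge (hy hAy)

end AlmostEverywhere

section Balls

variable {X : Type*} [MetricSpace X] [MeasurableSpace X]

def WRHInftyBound (μ : Measure X) (Ω : Set X) (w : X → ℝ) (C : ℝ) : Prop :=
  ∀ (x : X) (r : ℝ), 0 < r →
    IsCompact (closure (ball x (2 * r))) → closure (ball x (2 * r)) ⊆ Ω →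
    essSup (fun y => ENNReal.ofReal (w y)) (μ.restrict (ball x r)) ≤
      ENNReal.ofReal (C * ⨍ y in ball x (2 * r), w y ∂μ)

def PhiEssSupBound (μ : Measure X) (Ω : Set X) (w : X → ℝ) (φ : ℝ → ℝ) (C : ℝ) : Prop :=
  ∀ (x : X) (r : ℝ), 0 < r →
    IsCompact (closure (ball x (2 * r))) → closure (ball x (2 * r)) ⊆ Ω →
    essSup (fun y => ENNReal.ofReal (w y * φ (w y / ⨍ z in ball x (2 * r), w z ∂μ)))
        (μ.restrict (ball x r ∩ {y | (⨍ z in ball x (2 * r), w z ∂μ) < w y})) ≤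
      ENNReal.ofReal (C * ⨍ z in ball x (2 * r), w z ∂μ)

variable {μ : Measure X} {Ω : Set X} {w : X → ℝ} {φ : ℝ → ℝ} {C : ℝ}

theorem MeasureTheory.LocallyIntegrableOn.integrableOn_ball_of_closure_ball_subset
    (hw : LocallyIntegrableOn w Ω μ) {x : X} {r R : ℝ} (hcpt : IsCompact (closure (ball x R)))
    (hsub : closure (ball x R) ⊆ Ω) (hrR : r ≤ R) : IntegrableOn w (ball x r) μ :=
  (hw.integrableOn_compact_subset hsub hcpt).mono_set ((ball_subset_ball hrR).trans subset_closure)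

theorem exists_phiEssSupBound_of_wrhInftyBound (hw : ∀ x, 0 ≤ w x)
    (hwloc : LocallyIntegrableOn w Ω μ) (hC : 0 ≤ C) (h : WRHInftyBound μ Ω w C)
    (hφ : MonotoneOn φ (Ioi 1)) (hφpos : ∀ s, 1 < s → 0 < φ s) :
    ∃ C' : ℝ, 0 < C' ∧ PhiEssSupBound μ Ω w φ C' := by
  set M := max C 2
  have hM : 1 < M := one_lt_two.trans_le (le_max_right _ _)
  have hφM : 0 < φ M := hφpos M hM
  refine ⟨M * φ M, by positivity, fun x r hr hcpt hsub => ?_⟩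
  set A := ⨍ z in ball x (2 * r), w z ∂μ
  have hA : 0 ≤ A := average_nonneg hw
  have hwB := hwloc.integrableOn_ball_of_closure_ball_subset hcpt hsub (by linarith : r ≤ 2 * r)
  have hbound : ∀ᵐ y ∂μ.restrict (ball x r), w y ≤ M * A :=
    ((essSup_ofReal_le_ofReal_iff (by positivity)).1 (h x r hr hcpt hsub)).mono fun _ hy =>
      hy.trans (by gcongr; exact le_max_left _ _)
  rw [inter_comm, ← Measure.restrict_restrict₀ (nullMeasurableSet_lt aemeasurable_const
    hwB.aemeasurable), essSup_ofReal_le_ofReal_iff (by positivity)]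
  exact ae_restrict_mul_apply_div_le hwB.aemeasurable hφ hφpos hA hbound

theorem wrhInftyBound_of_phiEssSupBound
    (hball : ∀ (x : X) (r : ℝ), 0 < r → 0 < μ (ball x r) ∧ μ (ball x r) < ⊤)
    (hw : ∀ x, 0 ≤ w x) (hwloc : LocallyIntegrableOn w Ω μ) (hφ : MonotoneOn φ (Ioi 1))
    (hφ2 : 0 < φ 2) (hC : 0 ≤ C) (h : PhiEssSupBound μ Ω w φ C) :
    WRHInftyBound μ Ω w (max 2 (C / φ 2)) := by
  intro x r hr hcpt hsub
  set A := ⨍ z in ball x (2 * r), w z ∂μ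
  have hA : 0 ≤ A := average_nonneg hw
  rw [essSup_ofReal_le_ofReal_iff (by positivity)]
  rcases hA.eq_or_lt with hA0 | hApos
  · obtain ⟨hpos, hfin⟩ := hball x (2 * r) (by linarith)
    have hw0 := ae_eq_zero_of_setAverage_eq_zero hw
      (hwloc.integrableOn_ball_of_closure_ball_subset hcpt hsub le_rfl) hpos.ne' hfin.ne hA0.symm
    filter_upwards [ae_restrict_of_ae_restrict_of_subset (ball_subset_ball (by linarith)) hw0]
      with y hy
    rw [← hA0, mul_zero]
    exact hy.le
  · have hwB := hwloc.integrableOn_ball_of_closure_ball_subset hcpt hsub (by linarith : r ≤ 2 * r)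
    have hφC := h x r hr hcpt hsub
    rw [inter_comm, ← Measure.restrict_restrict₀ (nullMeasurableSet_lt aemeasurable_const
      hwB.aemeasurable), essSup_ofReal_le_ofReal_iff (by positivity)] at hφC
    exact ae_le_of_ae_restrict_mul_apply_div_le hwB.aemeasurable hφ hφ2 hApos hφC

end Balls

theorem wrhInfty_iff_phi_esssup_general {X : Type*} [MetricSpace X] [MeasurableSpace X]
    (μ : Measure X) (Cd : ℝ)
    (hdoub : ∀ (x : X) (r : ℝ), 0 < r →
      0 < μ (ball x r) ∧ μ (ball x r) < ⊤ ∧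
      μ (ball x (2 * r)) ≤ ENNReal.ofReal Cd * μ (ball x r))
    (Ω : Set X) (w : X → ℝ) (hw : ∀ x, 0 ≤ w x)
    (hwloc : LocallyIntegrableOn w Ω μ) :
    ((∃ C : ℝ, 0 < C ∧ ∀ (x : X) (r : ℝ), 0 < r →
        IsCompact (closure (ball x (2 * r))) → closure (ball x (2 * r)) ⊆ Ω →
        essSup (fun y => ENNReal.ofReal (w y)) (μ.restrict (ball x r)) ≤
          ENNReal.ofReal (C * ⨍ y in ball x (2 * r), w y ∂μ)) ↔
      (∃ (φ : ℝ → ℝ) (C : ℝ), (∀ s t : ℝ, 1 < s → s ≤ t → φ s ≤ φ t) ∧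
        (∀ t : ℝ, 1 < t → 0 < φ t) ∧ 0 < C ∧
        ∀ (x : X) (r : ℝ), 0 < r →
          IsCompact (closure (ball x (2 * r))) → closure (ball x (2 * r)) ⊆ Ω →
          essSup
              (fun y => ENNReal.ofReal
                (w y * φ (w y / ⨍ z in ball x (2 * r), w z ∂μ)))
              (μ.restrict (ball x r ∩ {y | (⨍ z in ball x (2 * r), w z ∂μ) < w y})) ≤
            ENNReal.ofReal (C * ⨍ z in ball x (2 * r), w z ∂μ))) ∧
    ((∃ C : ℝ, 0 < C ∧ ∀ (x : X) (r : ℝ), 0 < r →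
        IsCompact (closure (ball x (2 * r))) → closure (ball x (2 * r)) ⊆ Ω →
        essSup (fun y => ENNReal.ofReal (w y)) (μ.restrict (ball x r)) ≤
          ENNReal.ofReal (C * ⨍ y in ball x (2 * r), w y ∂μ)) →
      ∀ φ : ℝ → ℝ, (∀ s t : ℝ, 1 < s → s ≤ t → φ s ≤ φ t) →
        (∀ t : ℝ, 1 < t → 0 < φ t) →
        ∃ C : ℝ, 0 < C ∧
          ∀ (x : X) (r : ℝ), 0 < r →
            IsCompact (closure (ball x (2 * r))) → closure (ball x (2 * r)) ⊆ Ω →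
            essSup
                (fun y => ENNReal.ofReal
                  (w y * φ (w y / ⨍ z in ball x (2 * r), w z ∂μ)))
                (μ.restrict (ball x r ∩ {y | (⨍ z in ball x (2 * r), w z ∂μ) < w y})) ≤
              ENNReal.ofReal (C * ⨍ z in ball x (2 * r), w z ∂μ)) := by
  have phi_of_wrh : ∀ φ : ℝ → ℝ, (∀ s t : ℝ, 1 < s → s ≤ t → φ s ≤ φ t) →
      (∀ t : ℝ, 1 < t → 0 < φ t) → ∀ C, 0 < C → WRHInftyBound μ Ω w C →
      ∃ C', 0 < C' ∧ PhiEssSupBound μ Ω w φ C' := fun φ hmono hpos C hC h =>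
    exists_phiEssSupBound_of_wrhInftyBound hw hwloc hC.le h
      (fun s hs t _ hst => hmono s t hs hst) hpos
  refine ⟨⟨fun ⟨C, hC, h⟩ => ?_, fun ⟨φ, C, hmono, hpos, hC, h⟩ => ?_⟩,
    fun ⟨C, hC, h⟩ φ hmono hpos => phi_of_wrh φ hmono hpos C hC h⟩
  · obtain ⟨C', hC', h'⟩ := phi_of_wrh (fun _ => 1) (fun _ _ _ _ => le_rfl)
      (fun _ _ => one_pos) C hC h
    exact ⟨fun _ => 1, C', fun _ _ _ _ => le_rfl, fun _ _ => one_pos, hC', h'⟩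
  · exact ⟨_, zero_lt_two.trans_le (le_max_left _ _),
      wrhInftyBound_of_phiEssSupBound (fun x r hr => ⟨(hdoub x r hr).1, (hdoub x r hr).2.1⟩)
        hw hwloc (fun s hs t _ hst => hmono s t hs hst) (hpos 2 one_lt_two) hC.le h⟩

/-- `w ∈ WRH_∞(Ω)` iff there exist a nondecreasing `φ : (1,∞) → (0,∞)` and a constant
`C > 0` with `esssup_{B ∩ {w > w_{2B}}} w·φ(w/w_{2B}) ≤ C w_{2B}` for all balls `B` with
`2B ⋐ Ω`; moreover, if `w ∈ WRH_∞(Ω)` then such a constant exists for every such `φ`. -/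
theorem wrhInfty_iff_phi_esssup {X : Type*} [MetricSpace X] [MeasurableSpace X] [BorelSpace X]
    (μ : Measure X) (Cd : ℝ) (hCd : 1 < Cd)
    (hdoub : ∀ (x : X) (r : ℝ), 0 < r →
      0 < μ (ball x r) ∧ μ (ball x r) < ⊤ ∧
      μ (ball x (2 * r)) ≤ ENNReal.ofReal Cd * μ (ball x r))
    (Ω : Set X) (hΩ : IsOpen Ω) (w : X → ℝ) (hw : ∀ x, 0 ≤ w x)
    (hwloc : LocallyIntegrableOn w Ω μ) :
    ((∃ C : ℝ, 0 < C ∧ ∀ (x : X) (r : ℝ), 0 < r →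
        IsCompact (closure (ball x (2 * r))) → closure (ball x (2 * r)) ⊆ Ω →
        essSup (fun y => ENNReal.ofReal (w y)) (μ.restrict (ball x r)) ≤
          ENNReal.ofReal (C * ⨍ y in ball x (2 * r), w y ∂μ)) ↔
      (∃ (φ : ℝ → ℝ) (C : ℝ), (∀ s t : ℝ, 1 < s → s ≤ t → φ s ≤ φ t) ∧
        (∀ t : ℝ, 1 < t → 0 < φ t) ∧ 0 < C ∧
        ∀ (x : X) (r : ℝ), 0 < r →
          IsCompact (closure (ball x (2 * r))) → closure (ball x (2 * r)) ⊆ Ω →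
          essSup
              (fun y => ENNReal.ofReal
                (w y * φ (w y / ⨍ z in ball x (2 * r), w z ∂μ)))
              (μ.restrict (ball x r ∩ {y | (⨍ z in ball x (2 * r), w z ∂μ) < w y})) ≤
            ENNReal.ofReal (C * ⨍ z in ball x (2 * r), w z ∂μ))) ∧
    ((∃ C : ℝ, 0 < C ∧ ∀ (x : X) (r : ℝ), 0 < r →
        IsCompact (closure (ball x (2 * r))) → closure (ball x (2 * r)) ⊆ Ω →
        essSup (fun y => ENNReal.ofReal (w y)) (μ.restrict (ball x r)) ≤
          ENNReal.ofReal (C * ⨍ y in ball x (2 * r), w y ∂μ)) →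
      ∀ φ : ℝ → ℝ, (∀ s t : ℝ, 1 < s → s ≤ t → φ s ≤ φ t) →
        (∀ t : ℝ, 1 < t → 0 < φ t) →
        ∃ C : ℝ, 0 < C ∧
          ∀ (x : X) (r : ℝ), 0 < r →
            IsCompact (closure (ball x (2 * r))) → closure (ball x (2 * r)) ⊆ Ω →
            essSup
                (fun y => ENNReal.ofReal
                  (w y * φ (w y / ⨍ z in ball x (2 * r), w z ∂μ)))
                (μ.restrict (ball x r ∩ {y | (⨍ z in ball x (2 * r), w z ∂μ) < w y})) ≤
              ENNReal.ofReal (C * ⨍ z in ball x (2 * r), w z ∂μ)) :=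
  wrhInfty_iff_phi_esssup_general μ Cd hdoub Ω w hw hwloc
end

section
/- Let w(x) = e^x on ℝ with the Lebesgue measure. Then w ∈ WRH_∞(ℝ): there exists a constant C > 0 such that esssup_B w ≤ C ⨍_{2B} w dx for every bounded open interval B = (a−r, a+r). Explicitly, for every a ∈ ℝ and r > 0 one has e^{a+r} / ((1/(4r))(e^{a+2r} − e^{a−2r})) = 4r e^{3r}/(e^{4r} − 1), which is a bounded function of r > 0. On the other hand, for every 1 < p < ∞, w does not belong to RH_p(ℝ): there is no constant C such that (⨍_B w^p dx)^{1/p} ≤ C ⨍_B w dx for every bounded interval B. -/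
/-!
All averages of `e^x` over intervals are explicit. Over `B = (a-r, a+r)` the supremum is
`e^{a+r}` and the average over `2B` is `e^{a-2r}(e^{4r}-1)/(4r)`, so their ratio is
`4r e^{3r}/(e^{4r}-1)`, which is at most `4` because `e^{4r} ≥ (1+r) e^{3r}`.
Over `(0, t)` the `L^p` average of `e^x` is `((e^{pt}-1)/(pt))^{1/p} ≈ e^t (pt)^{-1/p}` while the
average is `< e^t/t`; their ratio grows like `t^{1-1/p}`, so no reverse Hölder constant exists.
-/

open MeasureTheory Set Real Filter
open scoped ENNReal

lemma essSup_restrict_le_of_forall_mem_le {α β : Type*} [MeasurableSpace α] [CompleteLattice β]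
    {μ : Measure α} {s : Set α} {f : α → β} {c : β} (hs : MeasurableSet s)
    (hf : ∀ x ∈ s, f x ≤ c) : essSup f (μ.restrict s) ≤ c :=
  essSup_le_of_ae_le c ((ae_restrict_iff' hs).2 (ae_of_all _ hf))

lemma setAverage_exp_mul_Ioo {a b c : ℝ} (hc : c ≠ 0) (hab : a < b) :
    ⨍ x in Ioo a b, exp (c * x) = (exp (c * b) - exp (c * a)) / (c * (b - a)) := by
  rw [setAverage_eq, Real.volume_real_Ioo_of_le hab.le, ← integral_Ioc_eq_integral_Ioo,
    ← intervalIntegral.integral_of_le hab.le, intervalIntegral.integral_comp_mul_left exp hc,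
    integral_exp, smul_eq_mul, smul_eq_mul]
  field_simp

lemma setAverage_exp_Ioo {a b : ℝ} (hab : a < b) :
    ⨍ x in Ioo a b, exp x = (exp b - exp a) / (b - a) := by
  simpa using setAverage_exp_mul_Ioo one_ne_zero hab

lemma setAverage_exp_rpow_Ioo {a b p : ℝ} (hp : p ≠ 0) (hab : a < b) :
    ⨍ x in Ioo a b, exp x ^ p = (exp (p * b) - exp (p * a)) / (p * (b - a)) := by
  simp_rw [← exp_mul, mul_comm _ p]
  exact setAverage_exp_mul_Ioo hp hab

lemma exp_add_div_mean_eq (a r : ℝ) :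
    exp (a + r) / ((1 / (4 * r)) * (exp (a + 2 * r) - exp (a - 2 * r))) =
      4 * r * exp (3 * r) / (exp (4 * r) - 1) := by
  have h3 : exp (a + r) = exp (a - 2 * r) * exp (3 * r) := by rw [← exp_add]; ring_nf
  have h4 : exp (a + 2 * r) = exp (a - 2 * r) * exp (4 * r) := by rw [← exp_add]; ring_nf
  have hx := (exp_pos (a - 2 * r)).ne'
  rw [h3, h4, ← mul_sub_one]
  field_simp

lemma mul_exp_three_mul_le_exp_four_mul_sub_one {r : ℝ} (hr : 0 ≤ r) :
    r * exp (3 * r) ≤ exp (4 * r) - 1 := by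
  have h4 : exp (4 * r) = exp r * exp (3 * r) := by rw [← exp_add]; ring_nf
  nlinarith [add_one_le_exp r, one_le_exp (by linarith : 0 ≤ 3 * r)]

lemma four_mul_mul_exp_div_le_four {r : ℝ} (hr : 0 < r) :
    4 * r * exp (3 * r) / (exp (4 * r) - 1) ≤ 4 := by
  have hpos : 0 < exp (4 * r) - 1 := sub_pos.2 (one_lt_exp_iff.2 (by linarith))
  rw [div_le_iff₀ hpos, mul_assoc]
  gcongr
  exact mul_exp_three_mul_le_exp_four_mul_sub_one hr.le

lemma exp_add_le_four_mul_setAverage_exp {a r : ℝ} (hr : 0 < r) :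
    exp (a + r) ≤ 4 * ⨍ x in Ioo (a - 2 * r) (a + 2 * r), exp x := by
  set m := (1 / (4 * r)) * (exp (a + 2 * r) - exp (a - 2 * r))
  have hm : ⨍ x in Ioo (a - 2 * r) (a + 2 * r), exp x = m := by
    rw [setAverage_exp_Ioo (by linarith)]
    ring
  have hm_pos : 0 < m := by
    have := exp_lt_exp.2 (by linarith : a - 2 * r < a + 2 * r)
    positivity
  calc exp (a + r) = exp (a + r) / m * m := (div_mul_cancel₀ _ hm_pos.ne').symm
    _ = 4 * r * exp (3 * r) / (exp (4 * r) - 1) * m := by rw [exp_add_div_mean_eq]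
    _ ≤ 4 * m := by gcongr; exact four_mul_mul_exp_div_le_four hr
    _ = _ := by rw [hm]

lemma mul_exp_div_lt_rpow_mean_exp {p C t : ℝ} (hp : 0 < p) (hC : 0 < C) (ht : 0 < t)
    (hexp : 2 ≤ exp (p * t)) (hCt : 2 * p * C ^ p < t ^ (p - 1)) :
    C * exp t / t < ((exp (p * t) - 1) / (p * t)) ^ (1 / p) := by
  have hmean : 0 ≤ (exp (p * t) - 1) / (p * t) := div_nonneg (by linarith) (by positivity)
  rw [one_div, lt_rpow_inv_iff_of_pos (by positivity) hmean hp, div_rpow (by positivity) ht.le,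
    mul_rpow hC.le (exp_pos t).le, ← exp_mul, mul_comm t p,
    div_lt_div_iff₀ (rpow_pos_of_pos ht p) (by positivity)]
  have htp : t ^ p = t ^ (p - 1) * t := by rw [← rpow_add_one ht.ne']; ring_nf
  have h_main : exp (p * t) / 2 * t * (2 * p * C ^ p) < exp (p * t) / 2 * t * t ^ (p - 1) :=
    mul_lt_mul_of_pos_left hCt (by positivity)
  have h_rest : 0 ≤ (exp (p * t) / 2 - 1) * (t ^ (p - 1) * t) :=
    mul_nonneg (by linarith) (by positivity)
  rw [htp]
  linarith

lemma eventually_mul_mean_exp_lt_rpow_mean_exp {p : ℝ} (hp : 1 < p) (C : ℝ) :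
    ∀ᶠ t in atTop, C * ((exp t - 1) / t) < ((exp (p * t) - 1) / (p * t)) ^ (1 / p) := by
  have hp0 : 0 < p := by linarith
  filter_upwards [(tendsto_rpow_atTop (sub_pos.2 hp)).eventually_gt_atTop (2 * p * C ^ p),
    eventually_ge_atTop 1] with t hCt ht1
  have ht : 0 < t := by linarith
  have hexp : 2 ≤ exp (p * t) := by nlinarith [add_one_le_exp (p * t)]
  rcases le_or_gt C 0 with hC | hC
  · have hmean : 0 ≤ (exp t - 1) / t := div_nonneg (by linarith [one_le_exp ht.le]) ht.le
    calc C * ((exp t - 1) / t) ≤ 0 := mul_nonpos_of_nonpos_of_nonneg hC hmean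
      _ < _ := rpow_pos_of_pos (div_pos (by linarith) (by positivity)) _
  · calc C * ((exp t - 1) / t) < C * exp t / t := by rw [mul_div_assoc]; gcongr; linarith
      _ < _ := mul_exp_div_lt_rpow_mean_exp hp0 hC ht hexp hCt

lemma not_exists_rhp_exp {p : ℝ} (hp : 1 < p) :
    ¬ ∃ C : ℝ, ∀ a r : ℝ, 0 < r →
      (⨍ x in Ioo (a - r) (a + r), exp x ^ p) ^ (1 / p) ≤
        C * ⨍ x in Ioo (a - r) (a + r), exp x := by
  rintro ⟨C, hC⟩
  obtain ⟨t, hlt, ht⟩ :=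
    ((eventually_mul_mean_exp_lt_rpow_mean_exp hp C).and (eventually_gt_atTop 0)).exists
  have h := hC (t / 2) (t / 2) (half_pos ht)
  rw [sub_self, add_halves, setAverage_exp_rpow_Ioo (by positivity) ht, setAverage_exp_Ioo ht]
    at h
  simp only [mul_zero, exp_zero, sub_zero] at h
  exact h.not_gt hlt

/-- The weight `w(x) = e^x` on `ℝ` belongs to `WRH_∞(ℝ)`: `esssup_B w ≤ C ⨍_{2B} w` for all
bounded intervals `B = (a-r, a+r)`; explicitly the ratio equals `4r e^{3r}/(e^{4r}-1)`,
a bounded function of `r > 0`. However, `w ∉ RH_p(ℝ)` for any `1 < p < ∞`. -/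
theorem exp_mem_wrhInfty_not_rhp :
    (∃ C : ℝ, 0 < C ∧ ∀ a r : ℝ, 0 < r →
      essSup (fun x => ENNReal.ofReal (Real.exp x))
          (volume.restrict (Set.Ioo (a - r) (a + r))) ≤
        ENNReal.ofReal (C * ⨍ x in Set.Ioo (a - 2 * r) (a + 2 * r), Real.exp x ∂volume)) ∧
    (∀ a r : ℝ, 0 < r →
      Real.exp (a + r) /
          ((1 / (4 * r)) * (Real.exp (a + 2 * r) - Real.exp (a - 2 * r))) =
        4 * r * Real.exp (3 * r) / (Real.exp (4 * r) - 1)) ∧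
    (∃ M : ℝ, ∀ r : ℝ, 0 < r →
      4 * r * Real.exp (3 * r) / (Real.exp (4 * r) - 1) ≤ M) ∧
    (∀ p : ℝ, 1 < p →
      ¬ ∃ C : ℝ, ∀ a r : ℝ, 0 < r →
        (⨍ x in Set.Ioo (a - r) (a + r), Real.exp x ^ p ∂volume) ^ (1 / p) ≤
          C * ⨍ x in Set.Ioo (a - r) (a + r), Real.exp x ∂volume) := by
  refine ⟨⟨4, four_pos, fun a r hr => ?_⟩, fun a r _ => exp_add_div_mean_eq a r,
    ⟨4, fun r hr => four_mul_mul_exp_div_le_four hr⟩, fun p hp => not_exists_rhp_exp hp⟩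
  refine essSup_restrict_le_of_forall_mem_le measurableSet_Ioo fun x hx => ?_
  exact ENNReal.ofReal_le_ofReal
    ((exp_le_exp.2 hx.2.le).trans (exp_add_le_four_mul_setAverage_exp hr))
end

section
/- Let (X,d,μ) be a complete metric measure space with a doubling measure μ (doubling constant C_d). Let f ∈ L¹(X) be nonnegative, B ⊂ X a ball, and λ > ⨍_B f dμ. Then there exists a constant C₀ = C₀(C_d) > 1, depending only on C_d, such that ∫_{B ∩ {Mf > λ}} f dμ ≤ C₀ λ μ({x ∈ X : Mf(x) > λ}). -/
open MeasureTheory Metric Set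
open scoped ENNReal

/-- Reverse weak type `(1,1)` estimate: there is a constant `C₀ = C₀(C_d) > 1` such that
for nonnegative `f ∈ L¹(X)`, any ball `B` and any `λ > ⨍_B f dμ`,
`∫_{B ∩ {Mf > λ}} f dμ ≤ C₀ λ μ({Mf > λ})`. -/
theorem reverse_weak_type_estimate
    {X : Type*} [MetricSpace X] [CompleteSpace X] [MeasurableSpace X] [BorelSpace X]
    (μ : Measure X) (Cd : ℝ) (hCd : 1 < Cd)
    (hdoub : ∀ (x : X) (r : ℝ), 0 < r →
      0 < μ (ball x r) ∧ μ (ball x r) < ⊤ ∧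
      μ (ball x (2 * r)) ≤ ENNReal.ofReal Cd * μ (ball x r)) :
    ∃ C₀ : ℝ, 1 < C₀ ∧
      ∀ f : X → ℝ, Integrable f μ → (∀ x, 0 ≤ f x) →
        ∀ (x₀ : X) (R : ℝ), 0 < R →
          ∀ lam : ℝ, (⨍ y in ball x₀ R, f y ∂μ) < lam →
            ∫⁻ y in ball x₀ R ∩ {z | ENNReal.ofReal lam < HLMax μ f z},
                ENNReal.ofReal (f y) ∂μ ≤
              ENNReal.ofReal (C₀ * lam) *
                μ {z | ENNReal.ofReal lam < HLMax μ f z} := by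
  have hCd0 : (0:ℝ) < Cd := lt_trans one_pos hCd
  refine ⟨Cd ^ 3, one_lt_pow₀ hCd (by norm_num), ?_⟩
  intro f hf h0 x₀ R hR lam hlam
  -- notation
  set lamE : ℝ≥0∞ := ENNReal.ofReal lam with hlamE
  set E : Set X := {z | lamE < HLMax μ f z} with hE
  set avg : X → ℝ → ℝ≥0∞ :=
    fun z r => (μ (ball z r))⁻¹ * ∫⁻ y in ball z r, ENNReal.ofReal (f y) ∂μ with havg
  -- |f| = f
  have habs : ∀ z r, (∫⁻ y in ball z r, ENNReal.ofReal |f y| ∂μ)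
      = ∫⁻ y in ball z r, ENNReal.ofReal (f y) ∂μ := by
    intro z r
    exact lintegral_congr fun y => by rw [abs_of_nonneg (h0 y)]
  have hle : ∀ z r (x : X), x ∈ ball z r → avg z r ≤ HLMax μ f x := by
    intro z r x hx
    have : avg z r = (μ (ball z r))⁻¹ * ∫⁻ y in ball z r, ENNReal.ofReal |f y| ∂μ := by
      rw [havg]; simp only [habs]
    rw [this, HLMax]
    exact le_iSup_of_le z (le_iSup_of_le r (le_iSup_of_le hx le_rfl))
  have hmem : ∀ z r (x : X), x ∈ ball z r → lamE < avg z r → x ∈ E := by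
    intro z r x hx h
    exact lt_of_lt_of_le h (hle z r x hx)
  have hwit : ∀ x ∈ E, ∃ z r, x ∈ ball z r ∧ lamE < avg z r := by
    intro x hx
    rw [hE, mem_setOf_eq, HLMax] at hx
    rw [lt_iSup_iff] at hx
    obtain ⟨z, hz⟩ := hx
    rw [lt_iSup_iff] at hz
    obtain ⟨r, hr⟩ := hz
    rw [lt_iSup_iff] at hr
    obtain ⟨hxb, hr⟩ := hr
    refine ⟨z, r, hxb, ?_⟩
    show lamE < (μ (ball z r))⁻¹ * ∫⁻ y in ball z r, ENNReal.ofReal (f y) ∂μ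
    rw [← habs z r]
    exact hr
  have hEmeas : MeasurableSet E := by
    have : IsOpen E := by
      rw [isOpen_iff_forall_mem_open]
      intro x hx
      obtain ⟨z, r, hxb, hr⟩ := hwit x hx
      exact ⟨ball z r, fun y hy => hmem z r y hy hr, isOpen_ball, hxb⟩
    exact this.measurableSet
  -- positivity of lam
  have hμB := hdoub x₀ R hR
  have havgB : (0:ℝ) ≤ ⨍ y in ball x₀ R, f y ∂μ := by
    rw [setAverage_eq]
    have h1 : (0:ℝ) ≤ ∫ y in ball x₀ R, f y ∂μ :=
      setIntegral_nonneg measurableSet_ball fun y _ => h0 y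
    positivity
  have hlam0 : 0 < lam := lt_of_le_of_lt havgB hlam
  have hC₀lam : 0 < Cd ^ 3 * lam := by positivity
  -- avg ≤ lamE on a ball gives integral bound
  have havg_le : ∀ z r, 0 < r → avg z r ≤ lamE →
      (∫⁻ y in ball z r, ENNReal.ofReal (f y) ∂μ) ≤ lamE * μ (ball z r) := by
    intro z r hr h
    obtain ⟨hpos, hfin, -⟩ := hdoub z r hr
    calc (∫⁻ y in ball z r, ENNReal.ofReal (f y) ∂μ)
        = μ (ball z r) * ((μ (ball z r))⁻¹ * ∫⁻ y in ball z r, ENNReal.ofReal (f y) ∂μ) := by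
          rw [← mul_assoc, ENNReal.mul_inv_cancel hpos.ne' hfin.ne, one_mul]
      _ ≤ μ (ball z r) * lamE := mul_le_mul_right h _
      _ = lamE * μ (ball z r) := mul_comm _ _
  -- iterated doubling
  have hdoub8 : ∀ z r, 0 < r →
      μ (ball z (8 * r)) ≤ ENNReal.ofReal (Cd ^ 3) * μ (ball z r) := by
    intro z r hr
    have h4 : μ (ball z (8 * r)) ≤ ENNReal.ofReal Cd * μ (ball z (4 * r)) := by
      have := (hdoub z (4 * r) (by positivity)).2.2
      rw [show (2:ℝ) * (4 * r) = 8 * r by ring] at this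
      exact this
    have h2 : μ (ball z (4 * r)) ≤ ENNReal.ofReal Cd * μ (ball z (2 * r)) := by
      have := (hdoub z (2 * r) (by positivity)).2.2
      rw [show (2:ℝ) * (2 * r) = 4 * r by ring] at this
      exact this
    have h1 : μ (ball z (2 * r)) ≤ ENNReal.ofReal Cd * μ (ball z r) :=
      (hdoub z r hr).2.2
    calc μ (ball z (8 * r)) ≤ ENNReal.ofReal Cd * μ (ball z (4 * r)) := h4
      _ ≤ ENNReal.ofReal Cd * (ENNReal.ofReal Cd * μ (ball z (2 * r))) :=
          mul_le_mul_right h2 _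
      _ ≤ ENNReal.ofReal Cd * (ENNReal.ofReal Cd * (ENNReal.ofReal Cd * μ (ball z r))) :=
          mul_le_mul_right (mul_le_mul_right h1 _) _
      _ = ENNReal.ofReal (Cd ^ 3) * μ (ball z r) := by
          rw [ENNReal.ofReal_pow hCd0.le]; ring
  -- trivial case: infinite measure
  by_cases hEtop : μ E = ∞
  · rw [hEtop, ENNReal.mul_top (ENNReal.ofReal_pos.mpr hC₀lam).ne']
    exact le_top
  -- case 1 : B ⊆ E
  by_cases hBE : ball x₀ R ⊆ E
  · have hinter : ball x₀ R ∩ E = ball x₀ R := inter_eq_self_of_subset_left hBE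
    rw [hinter]
    have hint : (∫⁻ y in ball x₀ R, ENNReal.ofReal (f y) ∂μ)
        = ENNReal.ofReal (∫ y in ball x₀ R, f y ∂μ) :=
      (ofReal_integral_eq_lintegral_ofReal hf.integrableOn
        (Filter.Eventually.of_forall h0)).symm
    have htR : 0 < (μ (ball x₀ R)).toReal := ENNReal.toReal_pos hμB.1.ne' hμB.2.1.ne
    have hIB : (∫ y in ball x₀ R, f y ∂μ) ≤ lam * (μ (ball x₀ R)).toReal := by
      have := hlam
      rw [setAverage_eq] at this
      have h2 : (μ (ball x₀ R)).toReal⁻¹ * ∫ y in ball x₀ R, f y ∂μ < lam := this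
      calc (∫ y in ball x₀ R, f y ∂μ)
          = (μ (ball x₀ R)).toReal * ((μ (ball x₀ R)).toReal⁻¹ * ∫ y in ball x₀ R, f y ∂μ) := by
            rw [← mul_assoc, mul_inv_cancel₀ htR.ne', one_mul]
        _ ≤ (μ (ball x₀ R)).toReal * lam := mul_le_mul_of_nonneg_left h2.le htR.le
        _ = lam * (μ (ball x₀ R)).toReal := mul_comm _ _
    calc (∫⁻ y in ball x₀ R, ENNReal.ofReal (f y) ∂μ)
        = ENNReal.ofReal (∫ y in ball x₀ R, f y ∂μ) := hint
      _ ≤ ENNReal.ofReal (lam * (μ (ball x₀ R)).toReal) := ENNReal.ofReal_le_ofReal hIB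
      _ = ENNReal.ofReal lam * μ (ball x₀ R) := by
          rw [ENNReal.ofReal_mul hlam0.le, ENNReal.ofReal_toReal hμB.2.1.ne]
      _ ≤ ENNReal.ofReal (Cd ^ 3 * lam) * μ E := by
          apply mul_le_mul'
          · exact ENNReal.ofReal_le_ofReal (by nlinarith [one_lt_pow₀ hCd (three_ne_zero)])
          · exact measure_mono hBE
  -- case 2: there is a barrier point x* ∈ B \ E
  · obtain ⟨xs, hxsB, hxsE⟩ := not_subset.mp hBE
    have hMxs : HLMax μ f xs ≤ lamE := not_lt.mp hxsE
    set A : Set X := ball x₀ R ∩ E with hA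
    -- stopping-time selection
    have hsel : ∀ x ∈ A, ∃ z ρ, 0 < ρ ∧ x ∈ ball z ρ ∧ lamE < avg z ρ ∧
        avg z (8 * ρ) ≤ lamE := by
      intro x hx
      obtain ⟨z, r, hxz, havgr⟩ := hwit x hx.2
      have hr0 : 0 < r := pos_of_mem_ball hxz
      have hexP : ∃ k : ℕ, avg z ((8:ℝ) ^ k * r) ≤ lamE := by
        obtain ⟨k, hk⟩ := pow_unbounded_of_one_lt (dist xs z / r) (by norm_num : (1:ℝ) < 8)
        refine ⟨k, ?_⟩
        have hxm : xs ∈ ball z ((8:ℝ) ^ k * r) := by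
          rw [mem_ball]
          rw [div_lt_iff₀ hr0] at hk
          exact lt_of_le_of_lt (le_of_eq rfl) hk
        exact le_trans (hle z _ xs hxm) hMxs
      classical
      let k₀ := Nat.find hexP
      have hk₀ : avg z ((8:ℝ) ^ k₀ * r) ≤ lamE := Nat.find_spec hexP
      have hk₀0 : k₀ ≠ 0 := by
        intro h
        rw [h] at hk₀
        simp only [pow_zero, one_mul] at hk₀
        exact absurd hk₀ (not_le.mpr havgr)
      obtain ⟨m, hm⟩ := Nat.exists_eq_succ_of_ne_zero hk₀0
      have hmin : ¬ avg z ((8:ℝ) ^ m * r) ≤ lamE := Nat.find_min hexP (by omega)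
      refine ⟨z, (8:ℝ) ^ m * r, by positivity, ?_, not_le.mp hmin, ?_⟩
      · rw [mem_ball] at hxz ⊢
        calc dist x z < r := hxz
          _ ≤ (8:ℝ) ^ m * r := le_mul_of_one_le_left hr0.le (one_le_pow₀ (by norm_num))
      · rw [show (8:ℝ) * ((8:ℝ) ^ m * r) = (8:ℝ) ^ (m + 1) * r by ring]
        have h5 := hk₀
        rw [hm] at h5
        exact h5
    choose! z ρ hρ0 hxρ hρavg hρstop using hsel
    -- per-ball integral bound over the 8-dilate
    have hballE : ∀ x ∈ A, ball (z x) (ρ x) ⊆ E := by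
      intro x hx y hy
      exact hmem _ _ y hy (hρavg x hx)
    have hballint : ∀ x ∈ A, (∫⁻ y in ball (z x) (8 * ρ x), ENNReal.ofReal (f y) ∂μ)
        ≤ lamE * (ENNReal.ofReal (Cd ^ 3) * μ (ball (z x) (ρ x))) := by
      intro x hx
      calc (∫⁻ y in ball (z x) (8 * ρ x), ENNReal.ofReal (f y) ∂μ)
          ≤ lamE * μ (ball (z x) (8 * ρ x)) :=
            havg_le _ _ (by have := hρ0 x hx; positivity) (hρstop x hx)
        _ ≤ lamE * (ENNReal.ofReal (Cd ^ 3) * μ (ball (z x) (ρ x))) :=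
            mul_le_mul_right (hdoub8 _ _ (hρ0 x hx)) _
    have hfinal : lamE * (ENNReal.ofReal (Cd ^ 3)) = ENNReal.ofReal (Cd ^ 3 * lam) := by
      rw [ENNReal.ofReal_mul (by positivity), mul_comm]
    by_cases hbig : ∃ x ∈ A, 2 * R ≤ ρ x
    -- case 2a: one huge stopping ball covers B
    · obtain ⟨x, hxA, hρbig⟩ := hbig
      have hBsub : ball x₀ R ∩ E ⊆ ball (z x) (8 * ρ x) := by
        intro y hy
        rw [mem_ball]
        have hxx : dist x (z x) < ρ x := mem_ball.mp (hxρ x hxA)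
        have h1 : dist y x₀ < R := mem_ball.mp hy.1
        have h2 : dist x x₀ < R := mem_ball.mp hxA.1
        calc dist y (z x) ≤ dist y x₀ + dist x₀ x + dist x (z x) := dist_triangle4 _ _ _ _
          _ < R + R + ρ x := by
              have := dist_comm x₀ x
              nlinarith [dist_comm x x₀ ▸ h2]
          _ ≤ 8 * ρ x := by nlinarith [hρ0 x hxA]
      calc (∫⁻ y in ball x₀ R ∩ E, ENNReal.ofReal (f y) ∂μ)
          ≤ ∫⁻ y in ball (z x) (8 * ρ x), ENNReal.ofReal (f y) ∂μ :=
            lintegral_mono_set hBsub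
        _ ≤ lamE * (ENNReal.ofReal (Cd ^ 3) * μ (ball (z x) (ρ x))) := hballint x hxA
        _ ≤ lamE * (ENNReal.ofReal (Cd ^ 3) * μ E) :=
            mul_le_mul_right (mul_le_mul_right (measure_mono (hballE x hxA)) _) _
        _ = ENNReal.ofReal (Cd ^ 3 * lam) * μ E := by rw [← mul_assoc, hfinal]
    -- case 2b: all stopping balls have radius < 2R; Vitali covering
    · push_neg at hbig
      obtain ⟨u, huA, hdisj, hcov⟩ :=
        Vitali.exists_disjoint_subfamily_covering_enlargement_closedBall A z ρ (2 * R)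
          (fun a ha => (hbig a ha).le) 4 (by norm_num)
      have hAcov : A ⊆ ⋃ b : ↥u, ball (z b) (8 * ρ b) := by
        intro a ha
        obtain ⟨b, hbu, hsub⟩ := hcov a ha
        have hbA : b ∈ A := huA hbu
        have h1 : a ∈ closedBall (z a) (ρ a) := ball_subset_closedBall (hxρ a ha)
        have h2 : a ∈ closedBall (z b) (4 * ρ b) := hsub h1
        have h3 : a ∈ ball (z b) (8 * ρ b) := by
          rw [mem_ball]
          have := mem_closedBall.mp h2
          nlinarith [hρ0 b hbA]
        exact mem_iUnion.mpr ⟨⟨b, hbu⟩, h3⟩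
      -- countability of u
      have hdisj' : Pairwise (Function.onFun Disjoint fun b : ↥u => ball (z b) (ρ b)) := by
        intro b c hbc
        have hvals : (b : X) ≠ (c : X) := fun h => hbc (Subtype.coe_injective h)
        have := hdisj b.2 c.2 hvals
        exact this.mono ball_subset_closedBall ball_subset_closedBall
      have hUsub : (⋃ b : ↥u, ball (z b) (ρ b)) ⊆ E := by
        intro y hy
        obtain ⟨b, hb⟩ := mem_iUnion.mp hy
        exact hballE b (huA b.2) hb
      have hcnt : Countable ↥u := by
        have h1 : Set.Countable {b : ↥u | 0 < μ (ball (z b) (ρ b))} :=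
          Measure.countable_meas_pos_of_disjoint_of_meas_iUnion_ne_top μ
            (fun b => measurableSet_ball) hdisj'
            (fun h => hEtop (top_le_iff.mp (h ▸ measure_mono hUsub)))
        have h2 : {b : ↥u | 0 < μ (ball (z b) (ρ b))} = univ := by
          ext b
          simp only [mem_setOf_eq, mem_univ, iff_true]
          exact (hdoub (z b) (ρ b) (hρ0 b (huA b.2))).1
        rw [h2] at h1
        exact countable_univ_iff.mp h1
      have hμU : (∑' b : ↥u, μ (ball (z b) (ρ b))) ≤ μ E := by
        rw [← measure_iUnion hdisj' fun b => measurableSet_ball]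
        exact measure_mono hUsub
      calc (∫⁻ y in ball x₀ R ∩ E, ENNReal.ofReal (f y) ∂μ)
          ≤ ∫⁻ y in ⋃ b : ↥u, ball (z b) (8 * ρ b), ENNReal.ofReal (f y) ∂μ := by
            exact lintegral_mono_set hAcov
        _ ≤ ∑' b : ↥u, ∫⁻ y in ball (z b) (8 * ρ b), ENNReal.ofReal (f y) ∂μ :=
            lintegral_iUnion_le _ _
        _ ≤ ∑' b : ↥u, lamE * (ENNReal.ofReal (Cd ^ 3) * μ (ball (z b) (ρ b))) :=
            ENNReal.tsum_le_tsum fun b => hballint b (huA b.2)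
        _ = lamE * (ENNReal.ofReal (Cd ^ 3) * ∑' b : ↥u, μ (ball (z b) (ρ b))) := by
            rw [ENNReal.tsum_mul_left, ENNReal.tsum_mul_left]
        _ ≤ lamE * (ENNReal.ofReal (Cd ^ 3) * μ E) :=
            mul_le_mul_right (mul_le_mul_right hμU _) _
        _ = ENNReal.ofReal (Cd ^ 3 * lam) * μ E := by rw [← mul_assoc, hfinal]
end

section
/- Let (X,d,μ) be a metric measure space with a doubling measure μ (doubling constant C_d), Ω ⊂ X open, and w a weight on Ω. Then the following are equivalent (inequalities hold trivially when w(2B)=0): (b) there exist η, ε > 0 with η < C_d^{-5} such that for every ball B with 2B ⋐ Ω and every measurable F ⊂ B, μ(F) ≤ ε μ(B) implies w(F) ≤ η w(2B); (f) there exist constants α, β > 0 with β < C_d^{-5} such that w(B ∩ {w ≥ α w_{2B}}) ≤ β w(2B) for every ball B with 2B ⋐ Ω. -/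
open MeasureTheory Metric Set
open scoped ENNReal

/-!
(b) ⇒ (f) with `α = C_d / ε`: by Chebyshev and doubling, `α w_{2B} μ(B ∩ {w ≥ α w_{2B}})` is at
most `w(2B) = w_{2B} μ(2B) ≤ C_d w_{2B} μ(B)`, so the superlevel set has measure at most `ε μ(B)`
and (b) applies to it.

(f) ⇒ (b): split `F` along `{w ≥ α w_{2B}}`. The part inside is bounded by (f), the part outside
by `α w_{2B} μ(F) ≤ α ε w(2B)`; choosing `ε` so that `β + α ε` is the midpoint of `β` and
`C_d⁻⁵` gives (b).
-/

namespace MeasureTheory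

variable {X : Type*} [MeasurableSpace X] {μ : Measure X} {w : X → ℝ} {s : Set X}

theorem measure_le_ofReal_mul_iff {t : Set X} {ε : ℝ} (hε : 0 ≤ ε) (hs : μ s ≠ ∞)
    (ht : μ t ≠ ∞) : μ s ≤ ENNReal.ofReal ε * μ t ↔ μ.real s ≤ ε * μ.real t := by
  rw [measureReal_def, measureReal_def, ← ENNReal.toReal_ofReal hε, ← ENNReal.toReal_mul,
    ENNReal.toReal_le_toReal hs (ENNReal.mul_ne_top ENNReal.ofReal_ne_top ht),
    ENNReal.ofReal_toReal ENNReal.ofReal_ne_top]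

theorem IntegrableOn.nullMeasurableSet_const_le (hw : IntegrableOn w s μ) (c : ℝ) :
    NullMeasurableSet {x | c ≤ w x} (μ.restrict s) :=
  aestronglyMeasurable_const.nullMeasurableSet_le hw.aestronglyMeasurable

theorem mul_measureReal_inter_le_setIntegral (hw0 : 0 ≤ᵐ[μ.restrict s] w)
    (hw : IntegrableOn w s μ) (c : ℝ) :
    c * μ.real (s ∩ {x | c ≤ w x}) ≤ ∫ x in s, w x ∂μ := by
  have h := mul_meas_ge_le_integral_of_nonneg hw0 hw c
  rwa [measureReal_restrict_apply₀ (hw.nullMeasurableSet_const_le c), inter_comm] at h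

theorem setIntegral_le_setIntegral_inter_add (hw : IntegrableOn w s μ) {c : ℝ} (hc : 0 ≤ c)
    (hs : μ s ≠ ∞) :
    ∫ x in s, w x ∂μ ≤ ∫ x in s ∩ {x | c ≤ w x}, w x ∂μ + c * μ.real s := by
  set S := {x | c ≤ w x}
  have hS := hw.nullMeasurableSet_const_le c
  have _ : IsFiniteMeasure (μ.restrict s) := isFiniteMeasure_restrict.mpr hs
  have hlow : ∫ x in Sᶜ, w x ∂μ.restrict s ≤ c * μ.real s :=
    calc ∫ x in Sᶜ, w x ∂μ.restrict s ≤ ∫ _ in Sᶜ, c ∂μ.restrict s :=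
          setIntegral_mono_ae_restrict hw.integrable.integrableOn (integrableOn_const (by simp)) <|
            (ae_restrict_mem₀ hS.compl).mono fun x hx => le_of_lt (not_le.mp hx)
      _ = (μ.restrict s).real Sᶜ * c := by rw [setIntegral_const, smul_eq_mul]
      _ ≤ μ.real s * c := by
          gcongr
          exact (measureReal_mono (subset_univ _)).trans_eq (measureReal_restrict_apply_univ s)
      _ = c * μ.real s := mul_comm _ _
  rw [← integral_add_compl₀ hS hw, Measure.restrict_restrict₀ hS, inter_comm]
  linarith

theorem setAverage_nonneg_of_ae (hw0 : 0 ≤ᵐ[μ.restrict s] w) : 0 ≤ ⨍ x in s, w x ∂μ := by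
  rw [setAverage_eq, smul_eq_mul]
  exact mul_nonneg (inv_nonneg.mpr measureReal_nonneg) (integral_nonneg_of_ae hw0)

theorem LocallyIntegrableOn.integrableOn_of_isCompact_closure [TopologicalSpace X] {E : Type*}
    [NormedAddCommGroup E] {f : X → E} {Ω : Set X} (hf : LocallyIntegrableOn f Ω μ)
    (hs : IsCompact (closure s)) (hsΩ : closure s ⊆ Ω) : IntegrableOn f s μ :=
  (hf.integrableOn_compact_subset hsΩ hs).mono_set subset_closure

variable {B B₂ : Set X}

theorem setIntegral_le_of_setIntegral_inter_le (hBB₂ : B ⊆ B₂) (hB₂ : μ B₂ ≠ ∞)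
    (hw0 : 0 ≤ᵐ[μ.restrict B₂] w) (hw : IntegrableOn w B₂ μ) {α β ε : ℝ} (hα : 0 ≤ α)
    (hε : 0 ≤ ε)
    (hdist : ∫ x in B ∩ {x | α * ⨍ z in B₂, w z ∂μ ≤ w x}, w x ∂μ ≤ β * ∫ x in B₂, w x ∂μ)
    {F : Set X} (hFB : F ⊆ B) (hF : μ F ≤ ENNReal.ofReal ε * μ B) :
    ∫ x in F, w x ∂μ ≤ (β + α * ε) * ∫ x in B₂, w x ∂μ := by
  set A := ⨍ z in B₂, w z ∂μ
  have hB : μ B ≠ ∞ := measure_ne_top_of_subset hBB₂ hB₂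
  have hF' : μ F ≠ ∞ := measure_ne_top_of_subset hFB hB
  have hA : 0 ≤ A := setAverage_nonneg_of_ae hw0
  have hint : μ.real B₂ * A = ∫ x in B₂, w x ∂μ := measure_smul_setAverage w hB₂
  have hsuper : ∫ x in F ∩ {x | α * A ≤ w x}, w x ∂μ ≤ β * ∫ x in B₂, w x ∂μ := by
    exact le_trans (setIntegral_mono_set (hw.mono_set (inter_subset_left.trans hBB₂))
      (ae_restrict_of_ae_restrict_of_subset (inter_subset_left.trans hBB₂) hw0)
      (inter_subset_inter_left _ hFB).eventuallyLE) hdist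
  have hsub : α * A * μ.real F ≤ α * ε * ∫ x in B₂, w x ∂μ :=
    calc α * A * μ.real F ≤ α * A * (ε * μ.real B) := by
          gcongr
          exact (measure_le_ofReal_mul_iff hε hF' hB).mp hF
      _ = α * ε * (μ.real B * A) := by ring
      _ ≤ α * ε * (μ.real B₂ * A) := by gcongr
      _ = α * ε * ∫ x in B₂, w x ∂μ := by rw [hint]
  calc ∫ x in F, w x ∂μ
      ≤ ∫ x in F ∩ {x | α * A ≤ w x}, w x ∂μ + α * A * μ.real F :=
        setIntegral_le_setIntegral_inter_add (hw.mono_set (hFB.trans hBB₂)) (by positivity) hF'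
    _ ≤ (β + α * ε) * ∫ x in B₂, w x ∂μ := by linarith

theorem setIntegral_inter_const_le_le_of_weakAinfty (hB : NullMeasurableSet B μ) (hBB₂ : B ⊆ B₂)
    (hB₂ : μ B₂ ≠ ∞) {Cd : ℝ} (hCd : 0 < Cd) (hdoub : μ.real B₂ ≤ Cd * μ.real B)
    (hw0 : 0 ≤ᵐ[μ.restrict B₂] w) (hw : IntegrableOn w B₂ μ) {η ε : ℝ} (hε : 0 < ε)
    (hweak : ∀ F, MeasurableSet F → F ⊆ B → μ F ≤ ENNReal.ofReal ε * μ B →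
      ∫ x in F, w x ∂μ ≤ η * ∫ x in B₂, w x ∂μ) :
    ∫ x in B ∩ {x | Cd / ε * ⨍ z in B₂, w z ∂μ ≤ w x}, w x ∂μ ≤ η * ∫ x in B₂, w x ∂μ := by
  set A := ⨍ z in B₂, w z ∂μ
  have hint : μ.real B₂ * A = ∫ x in B₂, w x ∂μ := measure_smul_setAverage w hB₂
  rcases (setAverage_nonneg_of_ae hw0 : 0 ≤ A).eq_or_lt with hA | hA
  · have hzero : ∫ x in B₂, w x ∂μ = 0 := by rw [← hint, show A = 0 from hA.symm, mul_zero]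
    rw [hzero, mul_zero, ← hzero]
    exact setIntegral_mono_set hw hw0 (inter_subset_left.trans hBB₂).eventuallyLE
  have hB' : μ B ≠ ∞ := measure_ne_top_of_subset hBB₂ hB₂
  have hBw : IntegrableOn w B μ := hw.mono_set hBB₂
  have hmarkov : Cd / ε * A * μ.real (B ∩ {x | Cd / ε * A ≤ w x}) ≤ Cd * A * μ.real B :=
    calc _ ≤ ∫ x in B, w x ∂μ :=
          mul_measureReal_inter_le_setIntegral (ae_restrict_of_ae_restrict_of_subset hBB₂ hw0) hBw _
      _ ≤ ∫ x in B₂, w x ∂μ := setIntegral_mono_set hw hw0 hBB₂.eventuallyLE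
      _ = μ.real B₂ * A := hint.symm
      _ ≤ Cd * μ.real B * A := by gcongr
      _ = Cd * A * μ.real B := by ring
  have hsmall : μ.real (B ∩ {x | Cd / ε * A ≤ w x}) ≤ ε * μ.real B := by
    refine le_of_mul_le_mul_left ?_ (by positivity : 0 < Cd * A / ε)
    calc _ = Cd / ε * A * μ.real (B ∩ {x | Cd / ε * A ≤ w x}) := by ring
      _ ≤ Cd * A * μ.real B := hmarkov
      _ = Cd * A / ε * (ε * μ.real B) := by field_simp
  -- `w` need not be measurable, so (b) is applied to a measurable subset of full measure.
  have hnull : NullMeasurableSet (B ∩ {x | Cd / ε * A ≤ w x}) μ := by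
    rw [inter_comm]
    exact (nullMeasurableSet_restrict hB).mp (hBw.nullMeasurableSet_const_le _)
  obtain ⟨F, hFsub, hFm, hFeq⟩ := hnull.exists_measurable_subset_ae_eq
  rw [← setIntegral_congr_set hFeq]
  refine hweak F hFm (hFsub.trans inter_subset_left) ?_
  rw [measure_congr hFeq, measure_le_ofReal_mul_iff hε.le
    (measure_ne_top_of_subset inter_subset_left hB') hB']
  exact hsmall

end MeasureTheory

theorem small_weakAinfty_iff_distribution_set_general
    {X : Type*} [MetricSpace X] [MeasurableSpace X] [BorelSpace X]
    (μ : Measure X) (Cd : ℝ) (hCd : 1 < Cd)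
    (hdoub : ∀ (x : X) (r : ℝ), 0 < r →
      0 < μ (ball x r) ∧ μ (ball x r) < ⊤ ∧
      μ (ball x (2 * r)) ≤ ENNReal.ofReal Cd * μ (ball x r))
    (Ω : Set X) (w : X → ℝ) (hw : ∀ x, 0 ≤ w x)
    (hwloc : LocallyIntegrableOn w Ω μ) :
    (∃ η ε : ℝ, 0 < η ∧ 0 < ε ∧ η < (Cd ^ 5)⁻¹ ∧
      ∀ (x : X) (r : ℝ), 0 < r →
        IsCompact (closure (ball x (2 * r))) → closure (ball x (2 * r)) ⊆ Ω →
        ∀ F : Set X, MeasurableSet F → F ⊆ ball x r →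
          μ F ≤ ENNReal.ofReal ε * μ (ball x r) →
          ∫ y in F, w y ∂μ ≤ η * ∫ y in ball x (2 * r), w y ∂μ) ↔
    (∃ α β : ℝ, 0 < α ∧ 0 < β ∧ β < (Cd ^ 5)⁻¹ ∧
      ∀ (x : X) (r : ℝ), 0 < r →
        IsCompact (closure (ball x (2 * r))) → closure (ball x (2 * r)) ⊆ Ω →
        ∫ y in ball x r ∩ {y | α * (⨍ z in ball x (2 * r), w z ∂μ) ≤ w y}, w y ∂μ ≤
          β * ∫ y in ball x (2 * r), w y ∂μ) := by
  have hCd0 : 0 < Cd := zero_lt_one.trans hCd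
  have hball : ∀ x r, 0 < r → μ (ball x (2 * r)) ≠ ∞ ∧
      μ.real (ball x (2 * r)) ≤ Cd * μ.real (ball x r) := fun x r hr => by
    obtain ⟨-, hfin, hd⟩ := hdoub x r hr
    have hfin₂ := (hdoub x (2 * r) (by positivity)).2.1.ne
    exact ⟨hfin₂, (measure_le_ofReal_mul_iff hCd0.le hfin₂ hfin.ne).mp hd⟩
  constructor
  · rintro ⟨η, ε, hη, hε, hηC, hweak⟩
    refine ⟨Cd / ε, η, by positivity, hη, hηC, fun x r hr hK hKΩ => ?_⟩
    exact setIntegral_inter_const_le_le_of_weakAinfty measurableSet_ball.nullMeasurableSet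
      (ball_subset_ball (by linarith)) (hball x r hr).1 hCd0 (hball x r hr).2 (ae_of_all _ hw)
      (hwloc.integrableOn_of_isCompact_closure hK hKΩ) hε (hweak x r hr hK hKΩ)
  · rintro ⟨α, β, hα, hβ, hβC, hdist⟩
    set ε := ((Cd ^ 5)⁻¹ - β) / (2 * α)
    have hε : 0 < ε := div_pos (sub_pos.mpr hβC) (by positivity)
    have hαε : β + α * ε = (β + (Cd ^ 5)⁻¹) / 2 := by simp only [ε]; field_simp; ring
    refine ⟨(β + (Cd ^ 5)⁻¹) / 2, ε, by positivity, hε, by linarith,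
      fun x r hr hK hKΩ F _ hFB hF => ?_⟩
    rw [← hαε]
    exact setIntegral_le_of_setIntegral_inter_le (ball_subset_ball (by linarith))
      (hball x r hr).1 (ae_of_all _ hw) (hwloc.integrableOn_of_isCompact_closure hK hKΩ)
      hα.le hε.le (hdist x r hr hK hKΩ) hFB hF

/-- Equivalence of condition (b) (weak `A_∞` with small constant `η < C_d⁻⁵`) and
condition (f) (distribution-set condition `w(B ∩ {w ≥ α w_{2B}}) ≤ β w(2B)` with
`β < C_d⁻⁵`). -/
theorem small_weakAinfty_iff_distribution_set
    {X : Type*} [MetricSpace X] [MeasurableSpace X] [BorelSpace X]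
    (μ : Measure X) (Cd : ℝ) (hCd : 1 < Cd)
    (hdoub : ∀ (x : X) (r : ℝ), 0 < r →
      0 < μ (ball x r) ∧ μ (ball x r) < ⊤ ∧
      μ (ball x (2 * r)) ≤ ENNReal.ofReal Cd * μ (ball x r))
    (Ω : Set X) (hΩ : IsOpen Ω) (w : X → ℝ) (hw : ∀ x, 0 ≤ w x)
    (hwloc : LocallyIntegrableOn w Ω μ) :
    (∃ η ε : ℝ, 0 < η ∧ 0 < ε ∧ η < (Cd ^ 5)⁻¹ ∧
      ∀ (x : X) (r : ℝ), 0 < r →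
        IsCompact (closure (ball x (2 * r))) → closure (ball x (2 * r)) ⊆ Ω →
        ∀ F : Set X, MeasurableSet F → F ⊆ ball x r →
          μ F ≤ ENNReal.ofReal ε * μ (ball x r) →
          ∫ y in F, w y ∂μ ≤ η * ∫ y in ball x (2 * r), w y ∂μ) ↔
    (∃ α β : ℝ, 0 < α ∧ 0 < β ∧ β < (Cd ^ 5)⁻¹ ∧
      ∀ (x : X) (r : ℝ), 0 < r →
        IsCompact (closure (ball x (2 * r))) → closure (ball x (2 * r)) ⊆ Ω →
        ∫ y in ball x r ∩ {y | α * (⨍ z in ball x (2 * r), w z ∂μ) ≤ w y}, w y ∂μ ≤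
          β * ∫ y in ball x (2 * r), w y ∂μ) :=
  small_weakAinfty_iff_distribution_set_general μ Cd hCd hdoub Ω w hw hwloc
end

section
/- Let (X,d,μ) be a complete metric measure space with a doubling measure μ (doubling constant C_d). Let F be a measurable subset of a ball B ⊂ X with μ(F) > 0. Then there exists a constant A > 1, depending only on C_d, such that the function f = log⁺( (μ(B)/μ(F)) · M(χ_F) ) belongs to BMO(X) with ‖f‖_{BMO(X)} ≤ A. -/
open MeasureTheory Metric Set
open scoped ENNReal

/-!
Fix a ball `B = ball z R` and split `F` into `F₁ = F ∩ 2B` and `F₂ = F \ 2B`. By doubling,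
`M χ_{F₂}` varies by at most a factor `C_d³` on `B`, while `M χ_{F₁} ≥ μ(F₁) / (C_d² μ(B))`
there. Hence some level `S > 0` satisfies `S ≤ M χ_F ≤ M χ_{F₁} + C_d⁶ S` on `B`, and then
`|f - log⁺ (c S)| ≤ log 2 + 6 log⁺ C_d + log⁺ (M χ_{F₁} / S)` on `B`, whatever the factor `c ≥ 0`.
The weak type (1,1) bound for `M`, proved with the Vitali covering lemma, gives
`μ {y ∈ B | M χ_{F₁} y > S eˢ} ≤ C_d⁶ e⁻ˢ μ(B)`, so by the layer-cake formula the last term has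
mean at most `C_d⁶` over `B`.
-/

open Real
open scoped NNReal

theorem measure_inter_div_le_mul_of_subset {α : Type*} [MeasurableSpace α] {μ : Measure α}
    {B₁ B₂ : Set α} (h : B₁ ⊆ B₂) {c : ℝ≥0∞}
    (hc₀ : c ≠ 0) (hc : c ≠ ∞) (hμ : μ B₂ ≤ c * μ B₁) (G : Set α) :
    μ (G ∩ B₁) / μ B₁ ≤ c * (μ (G ∩ B₂) / μ B₂) :=
  calc μ (G ∩ B₁) / μ B₁ ≤ μ (G ∩ B₂) / μ B₁ := by gcongr
    _ = c * μ (G ∩ B₂) / (c * μ B₁) := (ENNReal.mul_div_mul_left _ _ hc₀ hc).symm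
    _ ≤ c * μ (G ∩ B₂) / μ B₂ := ENNReal.div_le_div_left hμ _
    _ = c * (μ (G ∩ B₂) / μ B₂) := mul_div_assoc _ _ _

theorem Set.PairwiseDisjoint.countable_of_measure_pos {α ι : Type*} [MeasurableSpace α]
    {μ : Measure α} {u : Set ι} {A : ι → Set α} (hu : u.PairwiseDisjoint A)
    (hA : ∀ i ∈ u, MeasurableSet (A i)) (hpos : ∀ i ∈ u, 0 < μ (A i))
    (hfin : μ (⋃ i ∈ u, A i) ≠ ∞) : u.Countable := by
  have := Measure.countable_meas_pos_of_disjoint_of_meas_iUnion_ne_top μ (As := fun i : u => A i)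
    (fun i => hA i i.2) (fun i j hij => hu i.2 j.2 (Subtype.coe_ne_coe.2 hij))
    (by rwa [biUnion_eq_iUnion] at hfin)
  rw [show {i : u | 0 < μ (A i)} = univ from eq_univ_of_forall fun i => hpos i i.2,
    countable_univ_iff] at this
  exact countable_coe_iff.1 this

theorem Real.lt_posLog_iff_exp_lt {s x : ℝ} (hs : 0 < s) (hx : 0 ≤ x) :
    s < log⁺ x ↔ exp s < x := by
  rcases hx.eq_or_lt with rfl | hx
  · rw [posLog_zero]
    exact iff_of_false (not_lt.2 hs.le) (not_lt.2 (exp_pos s).le)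
  rw [posLog_apply, lt_max_iff, or_iff_right hs.not_gt, lt_log_iff_exp_lt hx]

theorem Real.abs_posLog_mul_sub_posLog_mul_le {a b c K σ : ℝ} (hc : 0 ≤ c) (hσ : 0 < σ)
    (ha : σ ≤ a) (hab : a ≤ b + K * σ) :
    |log⁺ (c * a) - log⁺ (c * σ)| ≤ log 2 + log⁺ K + log⁺ (b / σ) := by
  have hmono : log⁺ (c * σ) ≤ log⁺ (c * a) := posLog_le_posLog (by positivity) (by gcongr)
  have hmul : log⁺ (c * a) ≤ log⁺ (c * σ) + log⁺ (a / σ) := by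
    rw [show c * a = c * σ * (a / σ) by field_simp]
    exact posLog_mul
  have hquot : log⁺ (a / σ) ≤ log⁺ (b / σ + K) := by
    refine posLog_le_posLog (div_nonneg (hσ.le.trans ha) hσ.le) ?_
    rw [div_add' _ _ _ hσ.ne']
    gcongr
  rw [abs_of_nonneg (sub_nonneg.2 hmono)]
  linarith [posLog_add (x := b / σ) (y := K)]

section Integrals

variable {α : Type*} [MeasurableSpace α]

theorem lintegral_ofReal_le_of_measure_lt_le_exp (ν : Measure α) {g : α → ℝ} (hg₀ : 0 ≤ g)
    (hg : Measurable g) {C : ℝ≥0∞}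
    (h : ∀ s, 0 < s → ν {x | s < g x} ≤ C * ENNReal.ofReal (exp (-s))) :
    ∫⁻ x, ENNReal.ofReal (g x) ∂ν ≤ C := by
  rw [lintegral_eq_lintegral_meas_lt ν (ae_of_all _ hg₀) hg.aemeasurable]
  calc ∫⁻ s in Ioi 0, ν {x | s < g x} ≤ ∫⁻ s in Ioi 0, C * ENNReal.ofReal (exp (-s)) :=
        setLIntegral_mono' measurableSet_Ioi h
    _ = C * ∫⁻ s in Ioi 0, ENNReal.ofReal (exp (-s)) := lintegral_const_mul C (by fun_prop)
    _ = C := by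
        rw [← ofReal_integral_eq_lintegral_ofReal (integrableOn_exp_neg_Ioi 0)
          (ae_of_all _ fun _ => (exp_pos _).le), integral_exp_neg_Ioi_zero, ENNReal.ofReal_one,
          mul_one]

theorem integral_abs_sub_average_le (ν : Measure α) [IsFiniteMeasure ν] {f : α → ℝ}
    (hf : Integrable f ν) (m : ℝ) :
    ∫ x, |f x - ⨍ y, f y ∂ν| ∂ν ≤ 2 * ∫ x, |f x - m| ∂ν := by
  have hfm : Integrable (fun x => |f x - m|) ν := (hf.sub (integrable_const m)).abs
  have hmean : ν.real univ * |m - ⨍ y, f y ∂ν| ≤ ∫ x, |f x - m| ∂ν := by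
    calc ν.real univ * |m - ⨍ y, f y ∂ν| = |∫ x, (f x - m) ∂ν| := by
          rw [integral_sub hf (integrable_const m), ← measure_smul_average, integral_const,
            smul_eq_mul, smul_eq_mul, ← mul_sub, abs_mul, abs_of_nonneg measureReal_nonneg,
            abs_sub_comm]
      _ ≤ ∫ x, |f x - m| ∂ν := abs_integral_le_integral_abs
  calc ∫ x, |f x - ⨍ y, f y ∂ν| ∂ν ≤ ∫ x, (|f x - m| + |m - ⨍ y, f y ∂ν|) ∂ν :=
        integral_mono (hf.sub (integrable_const _)).abs (hfm.add (integrable_const _))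
          fun x => abs_sub_le _ _ _
    _ = ∫ x, |f x - m| ∂ν + ν.real univ * |m - ⨍ y, f y ∂ν| := by
        rw [integral_add hfm (integrable_const _), integral_const, smul_eq_mul]
    _ ≤ 2 * ∫ x, |f x - m| ∂ν := by linarith

theorem setAverage_abs_sub_setAverage_le_of_abs_sub_le_add {μ : Measure α} {s : Set α}
    (hs : MeasurableSet s) (hμs : μ s ≠ ∞) {f g : α → ℝ} (hf : IntegrableOn f s μ) {m K C : ℝ}
    (hK : 0 ≤ K) (hC : 0 ≤ C) (hg₀ : 0 ≤ g) (hfg : ∀ x ∈ s, |f x - m| ≤ K + g x)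
    (hg : ∫⁻ x in s, ENNReal.ofReal (g x) ∂μ ≤ ENNReal.ofReal C * μ s) :
    ⨍ x in s, |f x - ⨍ y in s, f y ∂μ| ∂μ ≤ 2 * (K + C) := by
  have : Fact (μ s < ∞) := ⟨hμs.lt_top⟩
  have hlint : ∫⁻ x in s, ENNReal.ofReal |f x - m| ∂μ ≤ ENNReal.ofReal (K + C) * μ s :=
    calc ∫⁻ x in s, ENNReal.ofReal |f x - m| ∂μ
        ≤ ∫⁻ x in s, (ENNReal.ofReal K + ENNReal.ofReal (g x)) ∂μ :=
          setLIntegral_mono' hs fun x hx => by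
            rw [← ENNReal.ofReal_add hK (hg₀ x)]; exact ENNReal.ofReal_le_ofReal (hfg x hx)
      _ ≤ ENNReal.ofReal K * μ s + ENNReal.ofReal C * μ s := by
          rw [lintegral_add_left measurable_const, setLIntegral_const]; gcongr
      _ = ENNReal.ofReal (K + C) * μ s := by rw [ENNReal.ofReal_add hK hC, add_mul]
  have hint : ∫ x in s, |f x - m| ∂μ ≤ (K + C) * μ.real s := by
    rw [integral_eq_lintegral_of_nonneg_ae (f := fun x => |f x - m|)
      (ae_of_all _ fun _ => abs_nonneg _)
      (hf.sub (integrable_const m)).abs.aestronglyMeasurable]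
    calc _ ≤ (ENNReal.ofReal (K + C) * μ s).toReal :=
          ENNReal.toReal_mono (by finiteness) hlint
      _ = (K + C) * μ.real s := by
          rw [ENNReal.toReal_mul, ENNReal.toReal_ofReal (by positivity), measureReal_def]
  rw [average_eq, smul_eq_mul, measureReal_restrict_apply_univ]
  rcases measureReal_nonneg.eq_or_lt with h₀ | hpos
  · rw [← h₀, inv_zero, zero_mul]; positivity
  rw [inv_mul_le_iff₀ hpos]
  calc ∫ x in s, |f x - ⨍ y in s, f y ∂μ| ∂μ ≤ 2 * ∫ x in s, |f x - m| ∂μ :=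
        integral_abs_sub_average_le _ hf m
    _ ≤ 2 * ((K + C) * μ.real s) := by gcongr
    _ = μ.real s * (2 * (K + C)) := by ring

end Integrals

section Maximal

variable {X : Type*} [PseudoMetricSpace X] [MeasurableSpace X] {μ : Measure X}
  {G G₁ G₂ : Set X} {x z : X} {r : ℝ}

noncomputable def setMaximal (μ : Measure X) (G : Set X) (x : X) : ℝ≥0∞ :=
  ⨆ (z : X) (r : ℝ) (_ : x ∈ ball z r), μ (G ∩ ball z r) / μ (ball z r)

theorem HLMax_indicator_one (hG : MeasurableSet G) :
    HLMax μ (G.indicator fun _ => (1 : ℝ)) = setMaximal μ G := by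
  ext x
  simp only [HLMax, setMaximal]
  congr! 5 with z r
  have : (fun y => ENNReal.ofReal |G.indicator (fun _ => (1 : ℝ)) y|) =
      G.indicator fun _ => 1 := by
    ext y; by_cases hy : y ∈ G <;> simp [hy]
  rw [this, lintegral_indicator hG, setLIntegral_one, Measure.restrict_apply hG,
    ENNReal.div_eq_inv_mul]

theorem measure_inter_ball_div_le_setMaximal (hx : x ∈ ball z r) :
    μ (G ∩ ball z r) / μ (ball z r) ≤ setMaximal μ G x :=
  le_iSup₂_of_le z r (le_iSup_of_le hx le_rfl)

theorem setMaximal_le_one (x : X) : setMaximal μ G x ≤ 1 :=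
  iSup₂_le fun _ _ => iSup_le fun _ =>
    ENNReal.div_le_of_le_mul (by rw [one_mul]; exact measure_mono inter_subset_right)

theorem toReal_setMaximal_le_one (x : X) : (setMaximal μ G x).toReal ≤ 1 :=
  ENNReal.toReal_le_of_le_ofReal zero_le_one (by simpa using setMaximal_le_one x)

theorem setMaximal_ne_top (x : X) : setMaximal μ G x ≠ ∞ :=
  ne_top_of_le_ne_top ENNReal.one_ne_top (setMaximal_le_one x)

theorem setMaximal_mono (h : G₁ ⊆ G₂) : setMaximal μ G₁ ≤ setMaximal μ G₂ := fun _ =>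
  iSup₂_mono fun _ _ => iSup_mono fun _ => by gcongr

theorem setMaximal_union_le (x : X) :
    setMaximal μ (G₁ ∪ G₂) x ≤ setMaximal μ G₁ x + setMaximal μ G₂ x := by
  refine iSup₂_le fun z r => iSup_le fun hx => ?_
  calc μ ((G₁ ∪ G₂) ∩ ball z r) / μ (ball z r)
      ≤ (μ (G₁ ∩ ball z r) + μ (G₂ ∩ ball z r)) / μ (ball z r) := by
        gcongr
        rw [union_inter_distrib_right]
        exact measure_union_le _ _
    _ = μ (G₁ ∩ ball z r) / μ (ball z r) + μ (G₂ ∩ ball z r) / μ (ball z r) :=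
        ENNReal.add_div
    _ ≤ setMaximal μ G₁ x + setMaximal μ G₂ x :=
        add_le_add (measure_inter_ball_div_le_setMaximal hx)
          (measure_inter_ball_div_le_setMaximal hx)

theorem lowerSemicontinuous_setMaximal : LowerSemicontinuous (setMaximal μ G) := by
  refine lowerSemicontinuous_iSup fun z => lowerSemicontinuous_iSup fun r => ?_
  have : (fun x => ⨆ (_ : x ∈ ball z r), μ (G ∩ ball z r) / μ (ball z r)) =
      (ball z r).indicator fun _ => μ (G ∩ ball z r) / μ (ball z r) := by
    ext x; by_cases hx : x ∈ ball z r <;> simp [hx]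
  rw [this]
  exact isOpen_ball.lowerSemicontinuous_indicator zero_le

theorem measurable_setMaximal [OpensMeasurableSpace X] : Measurable (setMaximal μ G) :=
  lowerSemicontinuous_setMaximal.measurable

theorem measurable_posLog_mul_setMaximal [OpensMeasurableSpace X] (c : ℝ) :
    Measurable fun y => log⁺ (c * (setMaximal μ G y).toReal) :=
  continuous_posLog.measurable.comp (measurable_setMaximal.ennreal_toReal.const_mul c)

theorem abs_posLog_mul_setMaximal_le {c : ℝ} (hc : 0 ≤ c) (y : X) :
    |log⁺ (c * (setMaximal μ G y).toReal)| ≤ log⁺ c := by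
  rw [abs_of_nonneg posLog_nonneg]
  exact posLog_le_posLog (by positivity)
    (mul_le_of_le_one_right hc (toReal_setMaximal_le_one y))

end Maximal

section Doubling

variable {X : Type*} [PseudoMetricSpace X] [MeasurableSpace X] {μ : Measure X}
  {D : ℝ≥0} {F G : Set X} {y y' z : X} {R : ℝ} {t : ℝ≥0∞}

def IsDoubling (μ : Measure X) (D : ℝ≥0) : Prop :=
  ∀ (x : X) (r : ℝ), 0 < r →
    0 < μ (ball x r) ∧ μ (ball x r) < ∞ ∧ μ (ball x (2 * r)) ≤ D * μ (ball x r)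

namespace IsDoubling

variable (hμ : IsDoubling μ D)
include hμ

theorem one_le (x : X) : 1 ≤ (D : ℝ≥0∞) := by
  obtain ⟨h₀, hfin, h₂⟩ := hμ x 1 one_pos
  have : μ (ball x 1) ≤ D * μ (ball x 1) :=
    (measure_mono (ball_subset_ball (by norm_num))).trans h₂
  exact (ENNReal.mul_le_mul_iff_left h₀.ne' hfin.ne).1 (by rwa [one_mul])

theorem measure_ball_le_pow_mul (k : ℕ) (x : X) {r r' : ℝ} (hr : 0 < r) (hr' : r' ≤ 2 ^ k * r) :
    μ (ball x r') ≤ D ^ k * μ (ball x r) := by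
  refine (measure_mono (ball_subset_ball hr')).trans ?_
  clear hr'
  induction k with
  | zero => simp
  | succ k ih =>
    calc μ (ball x (2 ^ (k + 1) * r)) = μ (ball x (2 * (2 ^ k * r))) := by ring_nf
      _ ≤ D * μ (ball x (2 ^ k * r)) := (hμ x _ (by positivity)).2.2
      _ ≤ D * (D ^ k * μ (ball x r)) := by gcongr
      _ = D ^ (k + 1) * μ (ball x r) := by ring

/-- A ball through `y` that meets `G` outside `ball z (2 * R)` has radius above `R / 2`, so it
is comparable to a ball of the same centre containing all of `ball z R`. -/
theorem setMaximal_le_mul_of_disjoint (hG : Disjoint G (ball z (2 * R))) (hy : y ∈ ball z R)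
    (hy' : y' ∈ ball z R) : setMaximal μ G y ≤ D ^ 3 * setMaximal μ G y' := by
  refine iSup₂_le fun w r => iSup_le fun hyw => ?_
  rcases (G ∩ ball w r).eq_empty_or_nonempty with h | ⟨p, hpG, hpw⟩
  · simp [h]
  rw [mem_ball] at hy hy' hyw hpw
  have hp : 2 * R ≤ dist p z := not_lt.1 fun hp => hG.notMem_of_mem_left hpG (mem_ball.2 hp)
  have hr : 0 < r := dist_nonneg.trans_lt hyw
  have hR : 0 < R := dist_nonneg.trans_lt hy
  have hRr : R < 2 * r := by linarith [dist_triangle p y z, dist_triangle p w y, dist_comm w y]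
  have hsub : ball w r ⊆ ball w (r + 2 * R) := ball_subset_ball (by linarith)
  have hy'w : y' ∈ ball w (r + 2 * R) := by
    rw [mem_ball]; linarith [dist_triangle y' z y, dist_triangle y' y w, dist_comm z y]
  calc μ (G ∩ ball w r) / μ (ball w r)
      ≤ D ^ 3 * (μ (G ∩ ball w (r + 2 * R)) / μ (ball w (r + 2 * R))) :=
        measure_inter_div_le_mul_of_subset hsub (pow_ne_zero _ (by simpa using
          (zero_lt_one.trans_le (hμ.one_le w)).ne')) (by simp)
          (hμ.measure_ball_le_pow_mul 3 w hr (by linarith)) G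
    _ ≤ D ^ 3 * setMaximal μ G y' := by
        gcongr; exact measure_inter_ball_div_le_setMaximal hy'w

theorem measure_div_le_setMaximal (hG : G ⊆ ball z (2 * R)) (hy : y ∈ ball z R) :
    μ G / (D ^ 2 * μ (ball z R)) ≤ setMaximal μ G y := by
  rw [mem_ball] at hy
  have hR : 0 < R := dist_nonneg.trans_lt hy
  have hGy : G ∩ ball y (3 * R) = G := inter_eq_left.2 fun q hq => by
    have := mem_ball.1 (hG hq)
    rw [mem_ball]; linarith [dist_triangle q z y, dist_comm z y]
  have hball : μ (ball y (3 * R)) ≤ D ^ 2 * μ (ball z R) := by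
    refine (measure_mono fun q hq => ?_).trans (hμ.measure_ball_le_pow_mul 2 z hR le_rfl)
    rw [mem_ball] at hq ⊢; norm_num; linarith [dist_triangle q y z]
  calc μ G / (D ^ 2 * μ (ball z R)) ≤ μ (G ∩ ball y (3 * R)) / μ (ball y (3 * R)) := by
        rw [hGy]; exact ENNReal.div_le_div_left hball _
    _ ≤ setMaximal μ G y := measure_inter_ball_div_le_setMaximal (mem_ball_self (by linarith))

theorem setMaximal_pos (hG : μ G ≠ 0) (x : X) : 0 < setMaximal μ G x := by
  obtain ⟨n, hn⟩ : ∃ n : ℕ, μ (G ∩ ball x (n + 1)) ≠ 0 := by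
    by_contra! h
    apply hG
    rw [← inter_univ G, ← iUnion_ball_nat_succ x, inter_iUnion]
    exact measure_iUnion_null h
  refine lt_of_lt_of_le ?_
    (measure_inter_ball_div_le_setMaximal (z := x) (r := n + 1) (mem_ball_self (by positivity)))
  exact ENNReal.div_pos hn (hμ x _ (by positivity)).2.1.ne

theorem exists_ball_mul_le_of_lt_setMaximal (hG : G ⊆ ball z (2 * R)) (hy : y ∈ ball z R)
    (ht : t < setMaximal μ G y) :
    ∃ ρ, 0 < ρ ∧ ρ ≤ 3 * R ∧ t * μ (ball y ρ) ≤ D ^ 2 * μ (G ∩ ball y ρ) := by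
  obtain ⟨w, r, hyw, hlt⟩ : ∃ w r, y ∈ ball w r ∧ t < μ (G ∩ ball w r) / μ (ball w r) := by
    simpa only [setMaximal, lt_iSup_iff, exists_prop] using ht
  rw [mem_ball] at hy hyw
  have hr : 0 < r := dist_nonneg.trans_lt hyw
  have hR : 0 < R := dist_nonneg.trans_lt hy
  obtain ⟨h₀, hfin, -⟩ := hμ w r hr
  have hwr : t * μ (ball w r) ≤ μ (G ∩ ball w r) :=
    (ENNReal.le_div_iff_mul_le (.inl h₀.ne') (.inl hfin.ne)).1 hlt.le
  -- `ρ ≤ 2 * r` puts `ball y ρ` inside `ball w (4 * r)`; `ρ ≤ 3 * R` keeps it near `ball z R`.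
  refine ⟨min (2 * r) (3 * R), by positivity, min_le_right _ _, ?_⟩
  have hball : μ (ball y (min (2 * r) (3 * R))) ≤ D ^ 2 * μ (ball w r) := by
    refine (measure_mono fun q hq => ?_).trans (hμ.measure_ball_le_pow_mul 2 w hr le_rfl)
    rw [mem_ball] at hq ⊢
    linarith [dist_triangle q y w, min_le_left (2 * r) (3 * R)]
  have hinter : G ∩ ball w r ⊆ G ∩ ball y (min (2 * r) (3 * R)) := fun q ⟨hqG, hq⟩ => by
    have hqz := mem_ball.1 (hG hqG)
    rw [mem_ball] at hq
    refine ⟨hqG, mem_ball.2 (lt_min ?_ ?_)⟩ <;>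
      linarith [dist_triangle q w y, dist_triangle q z y, dist_comm w y, dist_comm z y]
  calc t * μ (ball y (min (2 * r) (3 * R))) ≤ t * (D ^ 2 * μ (ball w r)) := by gcongr
    _ = D ^ 2 * (t * μ (ball w r)) := by ring
    _ ≤ D ^ 2 * μ (G ∩ ball y (min (2 * r) (3 * R))) := by
        gcongr; exact hwr.trans (measure_mono hinter)

theorem mul_measure_lt_setMaximal_inter_ball_le [OpensMeasurableSpace X]
    (hGm : MeasurableSet G) (hG : G ⊆ ball z (2 * R)) (t : ℝ≥0∞) :
    t * μ ({y | t < setMaximal μ G y} ∩ ball z R) ≤ D ^ 4 * μ G := by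
  rcases le_or_gt R 0 with hR | hR
  · simp [ball_eq_empty.2 hR]
  set E := {y | t < setMaximal μ G y} ∩ ball z R
  choose! ρ hρ₀ hρR hρ using fun y (hy : y ∈ E) =>
    hμ.exists_ball_mul_le_of_lt_setMaximal hG hy.2 hy.1
  obtain ⟨u, huE, hdisj, hcover⟩ :=
    Vitali.exists_disjoint_subfamily_covering_enlargement_ball E id ρ (3 * R) hρR 4 (by norm_num)
  simp only [id] at hdisj hcover
  have hu : u.Countable := by
    have hsub : ⋃ b ∈ u, ball b (ρ b) ⊆ ball z (4 * R) := iUnion₂_subset fun b hb q hq => by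
      have hbz := mem_ball.1 (huE hb).2
      rw [mem_ball] at hq ⊢
      linarith [dist_triangle q b z, hρR b (huE hb)]
    exact hdisj.countable_of_measure_pos (fun _ _ => measurableSet_ball)
      (fun b hb => (hμ b _ (hρ₀ b (huE hb))).1)
      (ne_top_of_le_ne_top (hμ z (4 * R) (by positivity)).2.1.ne (measure_mono hsub))
  have hEcover : E ⊆ ⋃ b ∈ u, ball b (4 * ρ b) := fun y hy => by
    obtain ⟨b, hb, hsub⟩ := hcover y hy
    exact mem_biUnion hb (hsub (mem_ball_self (hρ₀ y hy)))
  calc t * μ E ≤ t * ∑' b : u, μ (ball (b : X) (4 * ρ b)) := by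
        gcongr; exact (measure_mono hEcover).trans (measure_biUnion_le μ hu _)
    _ ≤ t * ∑' b : u, D ^ 2 * μ (ball (b : X) (ρ b)) := by
        refine mul_le_mul_right (ENNReal.tsum_le_tsum fun b => ?_) t
        exact hμ.measure_ball_le_pow_mul 2 b (hρ₀ b (huE b.2)) (by norm_num)
    _ = D ^ 2 * ∑' b : u, t * μ (ball (b : X) (ρ b)) := by
        rw [ENNReal.tsum_mul_left, ENNReal.tsum_mul_left]; ring
    _ ≤ D ^ 2 * ∑' b : u, D ^ 2 * μ (G ∩ ball (b : X) (ρ b)) := by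
        exact mul_le_mul_right (ENNReal.tsum_le_tsum fun b : u => hρ b (huE b.2)) _
    _ = D ^ 4 * μ (⋃ b ∈ u, G ∩ ball b (ρ b)) := by
        rw [ENNReal.tsum_mul_left, measure_biUnion hu
          (hdisj.mono fun _ => inter_subset_right) fun _ _ => hGm.inter measurableSet_ball]
        ring
    _ ≤ D ^ 4 * μ G := by gcongr; exact iUnion₂_subset fun _ _ => inter_subset_left

theorem integrableOn_ball_of_abs_le {f : X → ℝ}
    (hf : AEStronglyMeasurable f μ) {C : ℝ} (hfC : ∀ x, |f x| ≤ C) (x : X) {r : ℝ} (hr : 0 < r) :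
    IntegrableOn f (ball x r) μ :=
  Measure.integrableOn_of_bounded (hμ x r hr).2.1.ne hf (ae_of_all _ hfC)

theorem locallyIntegrable_of_abs_le {f : X → ℝ}
    (hf : AEStronglyMeasurable f μ) {C : ℝ} (hfC : ∀ x, |f x| ≤ C) : LocallyIntegrable f μ :=
  fun x => ⟨ball x 1, ball_mem_nhds x one_pos, hμ.integrableOn_ball_of_abs_le hf hfC x one_pos⟩

/-- The part of `F` far from `ball z R` has a maximal function that is essentially constant on
`ball z R`; the level `S` records that constant together with the density of the near part. -/
theorem exists_setMaximal_sandwich (hF : μ F ≠ 0) (hR : 0 < R) :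
    ∃ S : ℝ≥0∞, S ≠ 0 ∧ S ≠ ∞ ∧ μ (F ∩ ball z (2 * R)) ≤ D ^ 2 * μ (ball z R) * S ∧
      ∀ y ∈ ball z R, S ≤ setMaximal μ F y ∧
        setMaximal μ F y ≤ setMaximal μ (F ∩ ball z (2 * R)) y + D ^ 6 * S := by
  set F₁ := F ∩ ball z (2 * R)
  set F₂ := F \ ball z (2 * R)
  have hz : z ∈ ball z R := mem_ball_self hR
  have hF₂ : Disjoint F₂ (ball z (2 * R)) := disjoint_sdiff_left
  have hD₀ : (D : ℝ≥0∞) ≠ 0 := (zero_lt_one.trans_le (hμ.one_le z)).ne'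
  have hDB₀ : D ^ 2 * μ (ball z R) ≠ 0 := mul_ne_zero (pow_ne_zero _ hD₀) (hμ z R hR).1.ne'
  have hDB : D ^ 2 * μ (ball z R) ≠ ∞ := by finiteness [(hμ z R hR).2.1.ne]
  have hD₃₀ : (D : ℝ≥0∞) ^ 3 ≠ 0 := pow_ne_zero _ hD₀
  have hD₃ : (D : ℝ≥0∞) ^ 3 ≠ ∞ := by finiteness
  refine ⟨max (μ F₁ / (D ^ 2 * μ (ball z R))) (setMaximal μ F₂ z / D ^ 3), ?_, ?_, ?_,
    fun y hy => ⟨?_, ?_⟩⟩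
  · have : μ F₁ ≠ 0 ∨ μ F₂ ≠ 0 := by
      by_contra! h
      exact hF (by rw [← inter_union_sdiff F (ball z (2 * R))]; exact measure_union_null h.1 h.2)
    rcases this with h | h
    · exact (lt_max_of_lt_left (ENNReal.div_pos h hDB)).ne'
    · exact (lt_max_of_lt_right (ENNReal.div_pos (hμ.setMaximal_pos h z).ne' hD₃)).ne'
  · refine (max_lt (ENNReal.div_ne_top ?_ hDB₀).lt_top
      (ENNReal.div_ne_top (setMaximal_ne_top z) hD₃₀).lt_top).ne
    exact ne_top_of_le_ne_top (hμ z (2 * R) (by positivity)).2.1.ne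
      (measure_mono inter_subset_right)
  · calc μ F₁ = D ^ 2 * μ (ball z R) * (μ F₁ / (D ^ 2 * μ (ball z R))) :=
          (ENNReal.mul_div_cancel hDB₀ hDB).symm
      _ ≤ _ := by gcongr; exact le_max_left _ _
  · refine max_le ((hμ.measure_div_le_setMaximal inter_subset_right hy).trans
      (setMaximal_mono inter_subset_left y)) ?_
    refine le_trans (b := setMaximal μ F₂ y) (ENNReal.div_le_of_le_mul ?_)
      (setMaximal_mono sdiff_subset y)
    rw [mul_comm]
    exact hμ.setMaximal_le_mul_of_disjoint hF₂ hz hy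
  · calc setMaximal μ F y = setMaximal μ (F₁ ∪ F₂) y := by rw [inter_union_sdiff]
      _ ≤ setMaximal μ F₁ y + setMaximal μ F₂ y := setMaximal_union_le y
      _ ≤ setMaximal μ F₁ y + D ^ 6 * (setMaximal μ F₂ z / D ^ 3) := by
          gcongr
          rw [show 6 = 3 + 3 from rfl, pow_add, mul_assoc, ENNReal.mul_div_cancel hD₃₀ hD₃]
          exact hμ.setMaximal_le_mul_of_disjoint hF₂ hy hz
      _ ≤ _ := by gcongr; exact le_max_right _ _

theorem lintegral_posLog_setMaximal_div_le [OpensMeasurableSpace X] (hGm : MeasurableSet G)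
    (hG : G ⊆ ball z (2 * R)) {σ : ℝ} (hσ : 0 < σ)
    (hGσ : μ G ≤ D ^ 2 * μ (ball z R) * ENNReal.ofReal σ) :
    ∫⁻ y in ball z R, ENNReal.ofReal (log⁺ ((setMaximal μ G y).toReal / σ)) ∂μ ≤
      D ^ 6 * μ (ball z R) := by
  refine lintegral_ofReal_le_of_measure_lt_le_exp _ (fun _ => posLog_nonneg)
    (continuous_posLog.measurable.comp (measurable_setMaximal.ennreal_toReal.div_const σ))
    fun s hs => ?_
  set t := ENNReal.ofReal (σ * exp s)
  have ht₀ : t ≠ 0 := (ENNReal.ofReal_pos.2 (by positivity)).ne'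
  have hlevel : {y | s < log⁺ ((setMaximal μ G y).toReal / σ)} = {y | t < setMaximal μ G y} := by
    ext y
    rw [mem_ofPred_eq, mem_ofPred_eq, lt_posLog_iff_exp_lt hs (by positivity), lt_div_iff₀ hσ,
      ENNReal.ofReal_lt_iff_lt_toReal (by positivity) (setMaximal_ne_top y), mul_comm]
  have hσt : ENNReal.ofReal σ = t * ENNReal.ofReal (exp (-s)) := by
    rw [← ENNReal.ofReal_mul (by positivity), mul_assoc, ← exp_add, add_neg_cancel, exp_zero,
      mul_one]
  rw [Measure.restrict_apply' measurableSet_ball, hlevel,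
    ← ENNReal.mul_le_mul_iff_right ht₀ ENNReal.ofReal_ne_top]
  calc t * μ ({y | t < setMaximal μ G y} ∩ ball z R) ≤ D ^ 4 * μ G :=
        hμ.mul_measure_lt_setMaximal_inter_ball_le hGm hG t
    _ ≤ D ^ 4 * (D ^ 2 * μ (ball z R) * ENNReal.ofReal σ) := by gcongr
    _ = t * (D ^ 6 * μ (ball z R) * ENNReal.ofReal (exp (-s))) := by rw [hσt]; ring

theorem setAverage_abs_posLog_mul_setMaximal_sub_le [OpensMeasurableSpace X]
    (hFm : MeasurableSet F) (hF : μ F ≠ 0) {c : ℝ} (hc : 0 ≤ c) (hR : 0 < R) :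
    ⨍ y in ball z R, |log⁺ (c * (setMaximal μ F y).toReal) -
        ⨍ u in ball z R, log⁺ (c * (setMaximal μ F u).toReal) ∂μ| ∂μ ≤
      2 * (log 2 + 6 * log⁺ D + D ^ 6) := by
  obtain ⟨S, hS₀, hS, hF₁, hSF⟩ := hμ.exists_setMaximal_sandwich hF hR (z := z)
  have hσ : 0 < S.toReal := ENNReal.toReal_pos hS₀ hS
  refine setAverage_abs_sub_setAverage_le_of_abs_sub_le_add measurableSet_ball
    (hμ z R hR).2.1.ne ((hμ.integrableOn_ball_of_abs_le
      (measurable_posLog_mul_setMaximal c).aestronglyMeasurable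
      (abs_posLog_mul_setMaximal_le hc) z hR))
    (m := log⁺ (c * S.toReal))
    (g := fun y => log⁺ ((setMaximal μ (F ∩ ball z (2 * R)) y).toReal / S.toReal))
    (add_nonneg (log_nonneg one_le_two) (mul_nonneg (by norm_num) posLog_nonneg))
    (by positivity) (fun _ => posLog_nonneg) (fun y hy => ?_) ?_
  · obtain ⟨hlow, hup⟩ := hSF y hy
    have hD : (D : ℝ≥0∞) ^ 6 * S ≠ ∞ := by finiteness
    replace hup := ENNReal.toReal_mono (ENNReal.add_ne_top.2 ⟨setMaximal_ne_top y, hD⟩) hup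
    rw [ENNReal.toReal_add (setMaximal_ne_top y) hD, ENNReal.toReal_mul, ENNReal.toReal_pow,
      ENNReal.coe_toReal] at hup
    have := abs_posLog_mul_sub_posLog_mul_le hc hσ
      (ENNReal.toReal_mono (setMaximal_ne_top y) hlow) hup
    rw [posLog_pow] at this
    push_cast at this
    linarith
  · have := hμ.lintegral_posLog_setMaximal_div_le (hFm.inter measurableSet_ball)
      inter_subset_right hσ (by rwa [ENNReal.ofReal_toReal hS])
    simpa using this

end IsDoubling

end Doubling

theorem log_maximal_indicator_mem_BMO_general
    {X : Type*} [MetricSpace X] [MeasurableSpace X] [BorelSpace X]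
    (μ : Measure X) (Cd : ℝ) (hCd : 1 < Cd)
    (hdoub : ∀ (x : X) (r : ℝ), 0 < r →
      0 < μ (ball x r) ∧ μ (ball x r) < ⊤ ∧
      μ (ball x (2 * r)) ≤ ENNReal.ofReal Cd * μ (ball x r)) :
    ∃ A : ℝ, 1 < A ∧
      ∀ (x₀ : X) (R : ℝ), 0 < R →
        ∀ F : Set X, MeasurableSet F → F ⊆ ball x₀ R → 0 < μ F →
          ∀ f : X → ℝ,
            (f = fun y => max 0 (Real.log
              ((μ (ball x₀ R)).toReal / (μ F).toReal *
                (HLMax μ (F.indicator fun _ => (1 : ℝ)) y).toReal))) →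
            LocallyIntegrable f μ ∧
            ∀ (z : X) (R' : ℝ), 0 < R' →
              ⨍ y in ball z R', |f y - ⨍ u in ball z R', f u ∂μ| ∂μ ≤ A := by
  have hμ : IsDoubling μ Cd.toNNReal := hdoub
  have hD : (Cd.toNNReal : ℝ) = Cd := Real.coe_toNNReal Cd (by linarith)
  refine ⟨2 * (log 2 + 6 * log⁺ Cd + Cd ^ 6), ?_, ?_⟩
  · nlinarith [log_nonneg one_le_two, posLog_nonneg (x := Cd),
      one_lt_pow₀ hCd (n := 6) (by norm_num)]
  rintro x₀ R - F hF - hF₀ f rfl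
  have hc : 0 ≤ (μ (ball x₀ R)).toReal / (μ F).toReal := by positivity
  rw [HLMax_indicator_one hF]
  refine ⟨hμ.locallyIntegrable_of_abs_le (measurable_posLog_mul_setMaximal _).aestronglyMeasurable
    (abs_posLog_mul_setMaximal_le hc), fun z R' hR' => ?_⟩
  have := hμ.setAverage_abs_posLog_mul_setMaximal_sub_le hF hF₀.ne' hc hR' (z := z)
  rw [hD] at this
  exact this

/-- There is a constant `A = A(C_d) > 1` such that for every ball `B` and measurable
`F ⊆ B` with `μ(F) > 0`, the function `f = log⁺((μ(B)/μ(F)) · M(χ_F))` belongs to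
`BMO(X)` with `‖f‖_{BMO(X)} ≤ A`. -/
theorem log_maximal_indicator_mem_BMO
    {X : Type*} [MetricSpace X] [CompleteSpace X] [MeasurableSpace X] [BorelSpace X]
    (μ : Measure X) (Cd : ℝ) (hCd : 1 < Cd)
    (hdoub : ∀ (x : X) (r : ℝ), 0 < r →
      0 < μ (ball x r) ∧ μ (ball x r) < ⊤ ∧
      μ (ball x (2 * r)) ≤ ENNReal.ofReal Cd * μ (ball x r)) :
    ∃ A : ℝ, 1 < A ∧
      ∀ (x₀ : X) (R : ℝ), 0 < R →
        ∀ F : Set X, MeasurableSet F → F ⊆ ball x₀ R → 0 < μ F →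
          ∀ f : X → ℝ,
            (f = fun y => max 0 (Real.log
              ((μ (ball x₀ R)).toReal / (μ F).toReal *
                (HLMax μ (F.indicator fun _ => (1 : ℝ)) y).toReal))) →
            LocallyIntegrable f μ ∧
            ∀ (z : X) (R' : ℝ), 0 < R' →
              ⨍ y in ball z R', |f y - ⨍ u in ball z R', f u ∂μ| ∂μ ≤ A :=
  log_maximal_indicator_mem_BMO_general μ Cd hCd hdoub
end
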